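/- arXiv:1207.2393 — 6 statements merged into one kernel-verified Lean document; each statement's English description precedes it below -/
import Mathlib

section
/- Let G be a finite connected simple graph containing an adjacent pair of vertices u, v such that N_G(u)∖{v} = N_G(v)∖{u} ≠ ∅. For integers t, s ≥ 1, let G_{t,s} be the graph obtained from G by attaching a path P_t at u and a path P_s at v. If t ≥ s + 2 ≥ 3, then H(G_{t,s}) < H(G_{t−1,s+1}). -/
open SimpleGraph

/-- The Harary index of a finite simple graph. -/
noncomputable def hararyIndex {V : Type*} [Fintype V] (G : SimpleGraph V) : ℝ :=
  (∑ u : V, ∑ v : V, (1 : ℝ) / (G.dist u v)) / 2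

/-- The graph obtained from `G` by attaching a pendant path with `m` new vertices at
the vertex `u` (i.e. attaching the path `P_{m+1}` at `u`, with `u` as an endpoint).
The new vertex `Sum.inr i` is at distance `i + 1` from `u` along the path. -/
def attachPath {V : Type*} (G : SimpleGraph V) (u : V) (m : ℕ) :
    SimpleGraph (V ⊕ Fin m) :=
  G.map Function.Embedding.inl ⊔
    SimpleGraph.fromRel (fun x y =>
      (∃ i : Fin m, x = Sum.inl u ∧ y = Sum.inr i ∧ (i : ℕ) = 0) ∨
      (∃ i j : Fin m, x = Sum.inr i ∧ y = Sum.inr j ∧ (i : ℕ) + 1 = (j : ℕ)))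

/-!
Together with the edge `uv`, the two pendant paths form a single path, and since `u` and `v` are
twins, every other vertex `x` of `G` is at the same distance `δ x` from `u` and from `v`. Passing
from `G_{t,s}` to `G_{t-1,s+1}` moves one end of that path to its other end: distances along the
path do not change, while the distance from the moved vertex to each such `x` drops from
`δ x + t - 1` to `δ x + s`. As there is at least one such `x`, the Harary index strictly grows.
-/

open Finset Sum

namespace SimpleGraph

variable {α β : Type*} {H : SimpleGraph α} {H' : SimpleGraph β}

theorem Hom.dist_le (f : H →g H') {a b : α} (h : H.Reachable a b) :
    H'.dist (f a) (f b) ≤ H.dist a b := by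
  obtain ⟨p, hp⟩ := h.exists_walk_length_eq_dist
  exact hp ▸ p.length_map f ▸ SimpleGraph.dist_le (p.map f)

theorem Walk.le_add_length {D : α → ℕ} (hD : ∀ ⦃a b⦄, H.Adj a b → D b ≤ D a + 1)
    {a b : α} (w : H.Walk a b) : D b ≤ D a + w.length := by
  induction w with
  | nil => simp
  | cons h _ ih => have := hD h; simp only [Walk.length_cons]; omega

theorem Reachable.le_add_dist {D : α → ℕ} (hD : ∀ ⦃a b⦄, H.Adj a b → D b ≤ D a + 1)
    {a b : α} (h : H.Reachable a b) : D b ≤ D a + H.dist a b := by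
  obtain ⟨p, hp⟩ := h.exists_walk_length_eq_dist
  exact hp ▸ p.le_add_length hD

theorem exists_walk_length_of_adj_succ {f : ℕ → α} {i j : ℕ} (hij : i ≤ j)
    (hf : ∀ k, i ≤ k → k < j → H.Adj (f k) (f (k + 1))) :
    ∃ w : H.Walk (f i) (f j), w.length = j - i := by
  induction j, hij using Nat.le_induction with
  | base => exact ⟨.nil, by simp⟩
  | succ j hij ih =>
    obtain ⟨w, hw⟩ := ih fun k hik hkj => hf k hik (by omega)
    exact ⟨w.concat (hf j hij (by omega)), by rw [Walk.length_concat, hw]; omega⟩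

end SimpleGraph

section Twins

variable {V : Type*} {G : SimpleGraph V} {u v : V}

theorem adj_swap_of_neighborSet_sdiff_eq [DecidableEq V]
    (hN : G.neighborSet u \ {v} = G.neighborSet v \ {u}) {x y : V} (h : G.Adj x y) :
    G.Adj (Equiv.swap u v x) (Equiv.swap u v y) := by
  have hN' : ∀ w, w ≠ u → w ≠ v → (G.Adj u w ↔ G.Adj v w) := fun w hwu hwv => by
    simpa [hwu, hwv] using Set.ext_iff.1 hN w
  have := G.ne_of_adj h
  simp only [Equiv.swap_apply_def]
  split_ifs <;> subst_vars <;> grind [G.adj_comm]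

def twinSwap [DecidableEq V] (hN : G.neighborSet u \ {v} = G.neighborSet v \ {u}) : G →g G :=
  ⟨Equiv.swap u v, adj_swap_of_neighborSet_sdiff_eq hN⟩

theorem dist_eq_dist_swap_of_neighborSet_sdiff_eq [DecidableEq V] (hG : G.Connected)
    (hN : G.neighborSet u \ {v} = G.neighborSet v \ {u}) (x : V) :
    G.dist v x = G.dist u (Equiv.swap u v x) := by
  have h₁ := (twinSwap hN).dist_le (hG u (Equiv.swap u v x))
  have h₂ := (twinSwap hN).dist_le (hG v x)
  simp only [twinSwap, RelHom.coeFn_mk, Equiv.swap_apply_left, Equiv.swap_apply_right,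
    Equiv.swap_apply_self] at h₁ h₂
  exact le_antisymm h₁ h₂

end Twins

section AttachPath

variable {V : Type*} {G : SimpleGraph V} {u : V} {m : ℕ}

@[simp]
theorem attachPath_adj_inl_inl {x y : V} :
    (attachPath G u m).Adj (inl x) (inl y) ↔ G.Adj x y := by
  simp [attachPath]

@[simp]
theorem attachPath_adj_inl_inr {x : V} {i : Fin m} :
    (attachPath G u m).Adj (inl x) (inr i) ↔ x = u ∧ (i : ℕ) = 0 := by
  simp [attachPath]

@[simp]
theorem attachPath_adj_inr_inr {i j : Fin m} :
    (attachPath G u m).Adj (inr i) (inr j) ↔ (i : ℕ) + 1 = j ∨ (j : ℕ) + 1 = i := by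
  simp only [attachPath, sup_adj, map_adj, fromRel_adj, Function.Embedding.inl_apply]
  grind

def attachPath.inlHom (G : SimpleGraph V) (u : V) (m : ℕ) : G →g attachPath G u m :=
  ⟨inl, attachPath_adj_inl_inl.2⟩

/-- `inl u, inr 0, …, inr (m - 1)`: the vertices of the attached path in order, padded with
`inl u` beyond its end. -/
def pendantVertex (u : V) (m : ℕ) : ℕ → V ⊕ Fin m
  | 0 => inl u
  | k + 1 => if h : k < m then inr ⟨k, h⟩ else inl u

theorem pendantVertex_succ (i : Fin m) : pendantVertex u m (i + 1) = inr i := by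
  simp [pendantVertex]

theorem attachPath_adj_pendantVertex {k : ℕ} (hk : k < m) :
    (attachPath G u m).Adj (pendantVertex u m k) (pendantVertex u m (k + 1)) := by
  cases k with
  | zero => simp [pendantVertex, hk]
  | succ k => simp [pendantVertex, hk, show k < m by omega]

theorem attachPath_exists_walk_pendantVertex {i j : ℕ} (hij : i ≤ j) (hj : j ≤ m) :
    ∃ w : (attachPath G u m).Walk (pendantVertex u m i) (pendantVertex u m j),
      w.length = j - i :=
  exists_walk_length_of_adj_succ hij fun _ _ hk => attachPath_adj_pendantVertex (by omega)

theorem attachPath_reachable_inl_inr (i : Fin m) :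
    (attachPath G u m).Reachable (inl u) (inr i) := by
  obtain ⟨w, -⟩ := attachPath_exists_walk_pendantVertex (G := G) (Nat.zero_le (i + 1)) i.isLt
  rw [← pendantVertex_succ]
  exact ⟨w⟩

theorem attachPath_dist_inl_inr_le (i : Fin m) :
    (attachPath G u m).dist (inl u) (inr i) ≤ i + 1 := by
  obtain ⟨w, hw⟩ := attachPath_exists_walk_pendantVertex (G := G) (Nat.zero_le (i + 1)) i.isLt
  rw [← pendantVertex_succ]
  exact (dist_le w).trans_eq hw

theorem attachPath_dist_inr_inr_le {i j : Fin m} (hij : (i : ℕ) ≤ j) :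
    (attachPath G u m).dist (inr i) (inr j) ≤ j - i := by
  obtain ⟨w, hw⟩ := attachPath_exists_walk_pendantVertex (G := G) (u := u)
    (by omega : (i : ℕ) + 1 ≤ j + 1) j.isLt
  rw [← pendantVertex_succ i, ← pendantVertex_succ j]
  exact (dist_le w).trans (by omega)

noncomputable def attachPathDistFrom (G : SimpleGraph V) (u : V) (m : ℕ) (x : V) :
    V ⊕ Fin m → ℕ :=
  Sum.elim (G.dist x) fun i => G.dist x u + i + 1

theorem attachPathDistFrom_le_add_one (x : V) ⦃a b : V ⊕ Fin m⦄
    (h : (attachPath G u m).Adj a b) :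
    attachPathDistFrom G u m x b ≤ attachPathDistFrom G u m x a + 1 := by
  rcases a with a | i <;> rcases b with b | j
  · have hab := attachPath_adj_inl_inl.1 h
    have := hab.reachable.dist_triangle_right x
    simp only [attachPathDistFrom, elim_inl, dist_eq_one_iff_adj.2 hab] at this ⊢
    exact this
  · obtain ⟨rfl, hj⟩ := attachPath_adj_inl_inr.1 h
    simp [attachPathDistFrom, hj]
  · obtain ⟨rfl, hi⟩ := attachPath_adj_inl_inr.1 h.symm
    simp only [attachPathDistFrom, elim_inl, elim_inr]
    omega
  · simp only [attachPath_adj_inr_inr] at h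
    simp only [attachPathDistFrom, elim_inr]
    omega

theorem attachPath_connected (hG : G.Connected) : (attachPath G u m).Connected := by
  have hu : ∀ z, (attachPath G u m).Reachable (inl u) z := by
    rintro (x | i)
    · exact (hG u x).map (attachPath.inlHom G u m)
    · exact attachPath_reachable_inl_inr i
  have := hG.nonempty
  exact .mk fun a b => (hu a).symm.trans (hu b)

theorem attachPath_dist_inl (hG : G.Connected) (x : V) (z : V ⊕ Fin m) :
    (attachPath G u m).dist (inl x) z = attachPathDistFrom G u m x z := by
  apply le_antisymm
  · rcases z with y | i
    · exact (attachPath.inlHom G u m).dist_le (hG x y)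
    · calc (attachPath G u m).dist (inl x) (inr i)
          ≤ (attachPath G u m).dist (inl x) (inl u) + (attachPath G u m).dist (inl u) (inr i) :=
            (attachPath_reachable_inl_inr i).dist_triangle_right _
        _ ≤ G.dist x u + (i + 1) := by
            gcongr
            · exact (attachPath.inlHom G u m).dist_le (hG x u)
            · exact attachPath_dist_inl_inr_le i
  · simpa [attachPathDistFrom] using ((attachPath_connected hG).preconnected (inl x) z).le_add_dist
      (attachPathDistFrom_le_add_one x)

theorem attachPath_dist_inr_inr_of_le {i j : Fin m} (hij : (i : ℕ) ≤ j) :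
    (attachPath G u m).dist (inr i) (inr j) = j - i := by
  refine le_antisymm (attachPath_dist_inr_inr_le hij) ?_
  have := ((attachPath_reachable_inl_inr (G := G) (u := u) i).symm.trans
    (attachPath_reachable_inl_inr j)).le_add_dist (attachPathDistFrom_le_add_one u)
  simp only [attachPathDistFrom, elim_inr] at this
  omega

theorem attachPath_dist_inr_inr (i j : Fin m) :
    (attachPath G u m).dist (inr i) (inr j) = Nat.dist i j := by
  rcases le_total (i : ℕ) j with hij | hji
  · rw [attachPath_dist_inr_inr_of_le hij, Nat.dist_eq_sub_of_le hij]
  · rw [SimpleGraph.dist_comm, attachPath_dist_inr_inr_of_le hji, Nat.dist_eq_sub_of_le_right hji]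

end AttachPath

section PendantPaths

/-- Twice the Harary index of the path on `n` vertices. -/
noncomputable def pathInvDistSum (n : ℕ) : ℝ :=
  ∑ i ∈ range n, ∑ j ∈ range n, 1 / (Nat.dist i j : ℝ)

/-- The vertices `inr i` and `inr j` of two paths pendant at the ends of an edge are at
distance `i + j + 3`. -/
noncomputable def crossInvDistSum (m n : ℕ) : ℝ :=
  ∑ j ∈ range n, ∑ i ∈ range m, 1 / ((i : ℝ) + j + 3)

/-- The sum of `1 / d` over ordered pairs of vertices of two paths with `m` and `n` vertices,
pendant at the two ends of an edge (the ends themselves excluded). -/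
noncomputable def pendantInvDistSum (m n : ℕ) : ℝ :=
  pathInvDistSum m + pathInvDistSum n + 2 * crossInvDistSum m n

theorem pathInvDistSum_succ (k : ℕ) :
    pathInvDistSum (k + 1) = pathInvDistSum k + 2 * ∑ i ∈ range k, 1 / ((i : ℝ) + 1) := by
  have hlast :
      ∑ i ∈ range k, 1 / (Nat.dist i k : ℝ) = ∑ i ∈ range k, 1 / ((i : ℝ) + 1) := by
    rw [← sum_range_reflect]
    refine sum_congr rfl fun i hi => ?_
    rw [mem_range] at hi
    rw [Nat.dist_eq_sub_of_le (by omega), show k - (k - 1 - i) = i + 1 by omega]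
    push_cast
    ring
  simp only [pathInvDistSum, sum_range_succ, sum_add_distrib, Nat.dist_self, Nat.dist_comm k,
    hlast]
  push_cast
  ring

theorem crossInvDistSum_succ_left_add (a b : ℕ) :
    crossInvDistSum (a + 1) b + ∑ i ∈ range a, 1 / ((i : ℝ) + 3) =
      crossInvDistSum a (b + 1) + ∑ i ∈ range b, 1 / ((i : ℝ) + 3) := by
  have h₁ : ∑ i ∈ range (a + b), 1 / ((i : ℝ) + 3) =
      ∑ i ∈ range a, 1 / ((i : ℝ) + 3) + ∑ j ∈ range b, 1 / ((a : ℝ) + j + 3) := by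
    rw [sum_range_add]
    push_cast
    rfl
  have h₂ : ∑ i ∈ range (a + b), 1 / ((i : ℝ) + 3) =
      ∑ j ∈ range b, 1 / ((j : ℝ) + 3) + ∑ i ∈ range a, 1 / ((i : ℝ) + b + 3) := by
    rw [add_comm a b, sum_range_add]
    congr 1
    refine sum_congr rfl fun i _ => ?_
    push_cast
    ring
  simp only [crossInvDistSum, sum_range_succ, sum_add_distrib]
  linarith

theorem sum_range_one_div_add_one_sub_one_div_add_three (k : ℕ) :
    ∑ i ∈ range k, (1 / ((i : ℝ) + 1) - 1 / ((i : ℝ) + 3)) =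
      3 / 2 - 1 / ((k : ℝ) + 1) - 1 / ((k : ℝ) + 2) := by
  induction k with
  | zero => norm_num
  | succ k ih =>
    rw [sum_range_succ, ih]
    push_cast
    field_simp
    ring

/-- The pendant paths and the edge between their roots form one path, so moving a vertex from
one end to the other only changes its distances to the roots, from `a + 1, a + 2` to
`b + 1, b + 2`. -/
theorem pendantInvDistSum_succ_left_add (a b : ℕ) :
    pendantInvDistSum (a + 1) b + 2 * (1 / ((a : ℝ) + 1) + 1 / ((a : ℝ) + 2)) =
      pendantInvDistSum a (b + 1) + 2 * (1 / ((b : ℝ) + 1) + 1 / ((b : ℝ) + 2)) := by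
  have ha := sum_range_one_div_add_one_sub_one_div_add_three a
  have hb := sum_range_one_div_add_one_sub_one_div_add_three b
  rw [sum_sub_distrib] at ha hb
  rw [pendantInvDistSum, pendantInvDistSum, pathInvDistSum_succ, pathInvDistSum_succ]
  linarith [crossInvDistSum_succ_left_add a b]

end PendantPaths

section InvDistSum

variable {V : Type*} [Fintype V]

noncomputable def invDistSum (G : SimpleGraph V) : ℝ := ∑ x, ∑ y, 1 / (G.dist x y : ℝ)

/-- `∑ x, 1 / d(w, x)` for a vertex `w` of a path pendant at `u`, at distance `k` from `u`. -/
noncomputable def recipStatus (G : SimpleGraph V) (u : V) (k : ℕ) : ℝ :=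
  ∑ x, 1 / ((G.dist u x : ℝ) + k)

variable {G : SimpleGraph V} {u v : V} {m : ℕ}

theorem recipStatus_attachPath_inl (hG : G.Connected) (x : V) (k : ℕ) :
    recipStatus (attachPath G u m) (inl x) k =
      recipStatus G x k + ∑ i ∈ range m, 1 / ((G.dist x u : ℝ) + i + 1 + k) := by
  simp only [recipStatus, Fintype.sum_sum_type, attachPath_dist_inl hG, attachPathDistFrom,
    elim_inl, elim_inr]
  rw [← Fin.sum_univ_eq_sum_range (fun i => 1 / ((G.dist x u : ℝ) + i + 1 + k))]
  push_cast
  rfl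

theorem invDistSum_attachPath (hG : G.Connected) :
    invDistSum (attachPath G u m) =
      invDistSum G + 2 * ∑ i ∈ range m, recipStatus G u (i + 1) + pathInvDistSum m := by
  have hcross : ∑ x : V, ∑ i : Fin m, 1 / ((attachPath G u m).dist (inl x) (inr i) : ℝ) =
      ∑ i ∈ range m, recipStatus G u (i + 1) := by
    rw [Finset.sum_comm, ← Fin.sum_univ_eq_sum_range (fun i => recipStatus G u (i + 1))]
    refine sum_congr rfl fun i _ => sum_congr rfl fun x _ => ?_
    rw [attachPath_dist_inl hG, attachPathDistFrom, elim_inr, SimpleGraph.dist_comm]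
    push_cast
    ring_nf
  have hpath : ∑ i : Fin m, ∑ j : Fin m, 1 / ((attachPath G u m).dist (inr i) (inr j) : ℝ) =
      pathInvDistSum m := by
    simp only [attachPath_dist_inr_inr, pathInvDistSum]
    rw [← Fin.sum_univ_eq_sum_range (fun i => ∑ j ∈ range m, 1 / (Nat.dist i j : ℝ))]
    exact sum_congr rfl fun i _ => Fin.sum_univ_eq_sum_range (fun j => 1 / (Nat.dist i j : ℝ)) m
  have hcross' : ∑ i : Fin m, ∑ x : V, 1 / ((attachPath G u m).dist (inr i) (inl x) : ℝ) =
      ∑ x : V, ∑ i : Fin m, 1 / ((attachPath G u m).dist (inl x) (inr i) : ℝ) := by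
    rw [Finset.sum_comm]
    simp only [SimpleGraph.dist_comm]
  have hinl : ∑ x : V, ∑ y : V, 1 / ((attachPath G u m).dist (inl x) (inl y) : ℝ) =
      invDistSum G := by
    simp only [attachPath_dist_inl hG, attachPathDistFrom, elim_inl, invDistSum]
  rw [invDistSum]
  simp only [Fintype.sum_sum_type, sum_add_distrib]
  rw [hinl, hcross', hcross, hpath]
  ring

theorem recipStatus_eq_of_neighborSet_sdiff_eq (hG : G.Connected)
    (hN : G.neighborSet u \ {v} = G.neighborSet v \ {u}) (k : ℕ) :
    recipStatus G v k = recipStatus G u k := by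
  classical
  simp only [recipStatus, dist_eq_dist_swap_of_neighborSet_sdiff_eq hG hN]
  exact Equiv.sum_comp (Equiv.swap u v) fun x => 1 / ((G.dist u x : ℝ) + k)

theorem invDistSum_attachPath_attachPath (hG : G.Connected) (huv : G.Adj u v)
    (hN : G.neighborSet u \ {v} = G.neighborSet v \ {u}) (m n : ℕ) :
    invDistSum (attachPath (attachPath G u m) (inl v) n) =
      invDistSum G + 2 * ∑ i ∈ range m, recipStatus G u (i + 1) +
        2 * ∑ j ∈ range n, recipStatus G u (j + 1) +
        pendantInvDistSum m n := by
  have hstatus (j : ℕ) : recipStatus (attachPath G u m) (inl v) (j + 1) =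
      recipStatus G u (j + 1) + ∑ i ∈ range m, 1 / ((i : ℝ) + j + 3) := by
    rw [recipStatus_attachPath_inl hG, recipStatus_eq_of_neighborSet_sdiff_eq hG hN,
      dist_eq_one_iff_adj.2 huv.symm]
    congr 1
    refine sum_congr rfl fun i _ => ?_
    push_cast
    ring_nf
  rw [invDistSum_attachPath (attachPath_connected hG), invDistSum_attachPath hG]
  simp only [hstatus, sum_add_distrib, pendantInvDistSum, crossInvDistSum]
  ring

theorem recipStatus_succ_eq_add_sum_compl [DecidableEq V] (huv : G.Adj u v) (k : ℕ) :
    recipStatus G u (k + 1) = 1 / ((k : ℝ) + 1) + 1 / ((k : ℝ) + 2) +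
      ∑ x ∈ ({u, v} : Finset V)ᶜ, 1 / ((G.dist u x : ℝ) + (k + 1 : ℕ)) := by
  rw [recipStatus, ← sum_add_sum_compl {u, v}, sum_pair (G.ne_of_adj huv), SimpleGraph.dist_self,
    dist_eq_one_iff_adj.2 huv]
  push_cast
  ring

theorem invDistSum_attachPath_succ_lt (hG : G.Connected) (huv : G.Adj u v)
    (hN : G.neighborSet u \ {v} = G.neighborSet v \ {u})
    (hNne : (G.neighborSet u \ {v}).Nonempty) {a b : ℕ} (hba : b < a) :
    invDistSum (attachPath (attachPath G u (a + 1)) (inl v) b) <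
      invDistSum (attachPath (attachPath G u a) (inl v) (b + 1)) := by
  classical
  obtain ⟨w, hwu, hwv⟩ := hNne
  have hw : w ∈ ({u, v} : Finset V)ᶜ := by
    simpa [(G.ne_of_adj hwu).symm] using hwv
  have hfar : ∑ x ∈ ({u, v} : Finset V)ᶜ, 1 / ((G.dist u x : ℝ) + (a + 1 : ℕ)) <
      ∑ x ∈ ({u, v} : Finset V)ᶜ, 1 / ((G.dist u x : ℝ) + (b + 1 : ℕ)) :=
    sum_lt_sum_of_nonempty ⟨w, hw⟩ fun x _ =>
      one_div_lt_one_div_of_lt (by positivity) (by gcongr)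
  rw [invDistSum_attachPath_attachPath hG huv hN, invDistSum_attachPath_attachPath hG huv hN,
    sum_range_succ, sum_range_succ, recipStatus_succ_eq_add_sum_compl huv a,
    recipStatus_succ_eq_add_sum_compl huv b]
  linarith [pendantInvDistSum_succ_left_add a b]

end InvDistSum

/-- If `G` is connected with adjacent vertices `u, v` having the same neighbours besides
each other (and at least one such common neighbour), and `G_{t,s}` denotes `G` with a
path `P_t` attached at `u` and a path `P_s` attached at `v`, then for `t ≥ s + 2 ≥ 3`
we have `H(G_{t,s}) < H(G_{t-1,s+1})`. -/
theorem harary_attach_paths_lt {V : Type*} [Fintype V] (G : SimpleGraph V) (u v : V)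
    (hG : G.Connected) (huv : G.Adj u v)
    (hN : G.neighborSet u \ {v} = G.neighborSet v \ {u})
    (hNne : (G.neighborSet u \ {v}).Nonempty)
    (t s : ℕ) (hs : 1 ≤ s) (hts : s + 2 ≤ t) :
    hararyIndex (attachPath (attachPath G u (t - 1)) (Sum.inl v) (s - 1)) <
      hararyIndex (attachPath (attachPath G u (t - 2)) (Sum.inl v) s) := by
  obtain ⟨a, rfl⟩ : ∃ a, t = a + 2 := ⟨t - 2, by omega⟩
  obtain ⟨b, rfl⟩ : ∃ b, s = b + 1 := ⟨s - 1, by omega⟩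
  exact div_lt_div_of_pos_right
    (invDistSum_attachPath_succ_lt hG huv hN hNne (show b < a by omega)) two_pos
end

section
/- Let G be a finite connected simple graph whose vertex set is the union V(G) = A ∪ B ∪ C of sets with A ∩ B = {u}, A ∩ C = {v}, B ∩ C = ∅, such that every edge of G has both endpoints in A, both in B, or both in C. Suppose: (i) uv ∈ E(G); (ii) there is a nonempty set W ⊆ A ∖ {u,v} with N_G(u) ∩ (A ∖ {v}) = N_G(v) ∩ (A ∖ {u}) = W; (iii) the induced subgraph G[C] is a path v = z_1, z_2, …, z_s (s ≥ 1); (iv) the induced subgraph G[B] is connected and contains a path x_1, x_2, …, x_t with x_1 = u, t ≥ s + 2, which is a shortest path in G[B] between x_1 and x_t (i.e. the distance from x_1 to x_t in G[B] equals t − 1). Let G′ be the graph obtained from G by deleting all edges vw with w ∈ W and adding all edges x_2w with w ∈ W. Then H(G) < H(G′). -/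
/-!
Write `y = x 1`. In the new graph `y` takes over the role of `v` on every shortest path that
avoids `C \ {v}`, and the path `C` stays intact, so a distance can only grow between `z i` and a
vertex `p` outside `B ∪ C`: from at least `i + d(v,p)` to at most `i + 1 + d(u,p)`. In exchange
the distance from `p` to `x (i + 1)` drops from at least `i + 1 + d(u,p)` (the path `x` is a
geodesic of `G[B]`, and `B` hangs from `u`) to at most `i + d(v,p)` (through `y`). For `i < s` the
resulting bounds on the changes of `1/d` for `z i` and `x (i + 1)` cancel, and each of the remaining
`t - 1 - s ≥ 1` vertices of `x` gains at least `1/(i + d(v,p)) - 1/(i + 1 + d(u,p)) ≥ 0`, which is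
positive for `p ∈ W`, where `d(v,p) = 1 ≤ d(u,p)`.
-/

open SimpleGraph

open Finset Function

theorem sum_sum_pos_of_nonneg_off_block {α : Type*} [Fintype α] {g : α → α → ℝ}
    (hg : ∀ p q, g p q = g q p) {P K : Finset α} (hPK : Disjoint P K)
    (hoff : ∀ p q, (p ∈ P → q ∉ K) → (q ∈ P → p ∉ K) → 0 ≤ g p q)
    (hblock : 0 < ∑ p ∈ P, ∑ q ∈ K, g p q) : 0 < ∑ p, ∑ q, g p q := by
  classical
  have hswap : ∑ pq ∈ K ×ˢ P, g pq.1 pq.2 = ∑ p ∈ P, ∑ q ∈ K, g p q := by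
    rw [sum_product_right]
    exact sum_congr rfl fun p _ => sum_congr rfl fun q _ => hg q p
  calc 0 < ∑ pq ∈ P ×ˢ K, g pq.1 pq.2 + ∑ pq ∈ K ×ˢ P, g pq.1 pq.2 := by
        rw [hswap, sum_product]
        linarith
    _ = ∑ pq ∈ P ×ˢ K ∪ K ×ˢ P, g pq.1 pq.2 :=
        (sum_union (disjoint_product.2 (.inl hPK))).symm
    _ ≤ ∑ pq ∈ univ ×ˢ univ, g pq.1 pq.2 := by
        refine sum_le_sum_of_subset_of_nonneg (subset_univ _) fun ⟨p, q⟩ _ hpq => ?_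
        simp only [mem_union, mem_product, not_or, not_and] at hpq
        exact hoff p q hpq.1 fun hq hp => hpq.2 hp hq
    _ = ∑ p, ∑ q, g p q := sum_product _ _ _

theorem sum_Ico_le_sum_add_sum {s n : ℕ} (hsn : s ≤ n) {φ : ℕ → ℝ} {a : Fin s → ℝ}
    {b : Fin n → ℝ} (ha : ∀ i : Fin s, -φ i ≤ a i) (hb : ∀ k : Fin n, φ k ≤ b k) :
    ∑ k ∈ Ico s n, φ k ≤ ∑ i, a i + ∑ k, b k := by
  have hA : -∑ k ∈ range s, φ k ≤ ∑ i, a i := by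
    rw [← Fin.sum_univ_eq_sum_range, ← sum_neg_distrib]
    exact sum_le_sum fun i _ => ha i
  have hB : ∑ k ∈ range n, φ k ≤ ∑ k, b k := by
    rw [← Fin.sum_univ_eq_sum_range]
    exact sum_le_sum fun k _ => hb k
  linarith [sum_range_add_sum_Ico φ hsn]

theorem one_div_sub_one_div_nonneg {a b : ℕ} (ha : 0 < a) (hab : a ≤ b + 1) (k : ℕ) :
    0 ≤ (1 : ℝ) / (k + a : ℕ) - 1 / (k + 1 + b : ℕ) := by
  rw [sub_nonneg]
  exact one_div_le_one_div_of_le (by exact_mod_cast (by omega : 0 < k + a))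
    (by exact_mod_cast (by omega))

theorem one_div_sub_one_div_pos {a b : ℕ} (ha : 0 < a) (hab : a ≤ b) (k : ℕ) :
    0 < (1 : ℝ) / (k + a : ℕ) - 1 / (k + 1 + b : ℕ) := by
  rw [sub_pos]
  exact one_div_lt_one_div_of_lt (by exact_mod_cast (by omega : 0 < k + a))
    (by exact_mod_cast (by omega))

namespace SimpleGraph

variable {V : Type*} {G G' : SimpleGraph V} {S : Set V} {a b c u v y : V}

/-- `S` is attached to the rest of `G` only at `c`: every edge leaving `S` leaves it from `c`. -/
def EntersOnlyAt (G : SimpleGraph V) (S : Set V) (c : V) : Prop :=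
  ∀ ⦃p q⦄, G.Adj p q → q ∈ S → q ≠ c → p ∈ S

theorem entersOnlyAt_of_forall_adj {A B : Set V}
    (hedge : ∀ p q, G.Adj p q → (p ∈ A ∧ q ∈ A) ∨ (p ∈ B ∧ q ∈ B) ∨ (p ∈ S ∧ q ∈ S))
    (hA : A ∩ S ⊆ {c}) (hB : B ∩ S ⊆ {c}) : G.EntersOnlyAt S c := by
  intro p q hpq hq hqc
  rcases hedge p q hpq with ⟨-, hqA⟩ | ⟨-, hqB⟩ | ⟨hp, -⟩
  · exact absurd (hA ⟨hqA, hq⟩) hqc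
  · exact absurd (hB ⟨hqB, hq⟩) hqc
  · exact hp

namespace EntersOnlyAt

theorem mem_support (hS : G.EntersOnlyAt S c) (w : G.Walk a b) (ha : a ∉ S) (hb : b ∈ S) :
    c ∈ w.support := by
  obtain ⟨d, hd, hdS, hdS'⟩ := w.reverse.exists_boundary_dart S hb ha
  obtain rfl : d.fst = c := by
    by_contra hne
    exact hdS' (hS d.adj.symm hdS hne)
  simpa using w.reverse.dart_fst_mem_support_of_mem_darts hd

theorem dist_add_dist_le (hS : G.EntersOnlyAt S c) (ha : a ∉ S) (hb : b ∈ S)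
    (h : G.Reachable a b) : G.dist a c + G.dist c b ≤ G.dist a b := by
  classical
  obtain ⟨w, hw⟩ := h.exists_walk_length_eq_dist
  have hc := hS.mem_support w ha hb
  calc G.dist a c + G.dist c b ≤ (w.takeUntil c hc).length + (w.dropUntil c hc).length :=
        add_le_add (dist_le _) (dist_le _)
    _ = G.dist a b := by rw [← Walk.length_append, Walk.take_spec, hw]

theorem dist_le_of_dist_le (hS : G.EntersOnlyAt S c) (hG' : G'.Connected) (ha : a ∉ S)
    (hb : b ∈ S) (h : G.Reachable a b) (hac : G'.dist a c ≤ G.dist a c)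
    (hcb : G'.dist c b ≤ G.dist c b) : G'.dist a b ≤ G.dist a b :=
  hG'.dist_triangle.trans ((add_le_add hac hcb).trans (hS.dist_add_dist_le ha hb h))

theorem exists_induce_walk (hS : G.EntersOnlyAt S c) (hc : c ∈ S) {p : V} (w : G.Walk p c)
    (hp : p ∈ S) : ∃ w' : (G.induce S).Walk ⟨p, hp⟩ ⟨c, hc⟩, w'.length ≤ w.length := by
  induction w with
  | nil => exact ⟨.nil, le_rfl⟩
  | @cons p q r h w ih =>
    by_cases hpr : p = r
    · subst hpr
      exact ⟨.nil, by simp⟩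
    · have hq := hS h.symm hp hpr
      obtain ⟨w', hw'⟩ := ih hS hc hq
      have hpq : (G.induce S).Adj ⟨p, hp⟩ ⟨q, hq⟩ := h
      exact ⟨.cons hpq w', by simpa using hw'⟩

theorem induce_dist_le (hS : G.EntersOnlyAt S c) (hc : c ∈ S) (hp : a ∈ S)
    (h : G.Reachable a c) : (G.induce S).dist ⟨a, hp⟩ ⟨c, hc⟩ ≤ G.dist a c := by
  obtain ⟨w, hw⟩ := h.exists_walk_length_eq_dist
  obtain ⟨w', hw'⟩ := hS.exists_induce_walk hc w hp
  exact (dist_le w').trans (hw ▸ hw')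

end EntersOnlyAt

theorem exists_walk_of_adj_succ {n : ℕ} {f : Fin n → V}
    (hf : ∀ i j : Fin n, (i : ℕ) + 1 = j → G.Adj (f i) (f j)) {i j : Fin n}
    (hij : (i : ℕ) ≤ j) : ∃ w : G.Walk (f i) (f j), w.length = j - i := by
  suffices ∀ k (j : Fin n), (j : ℕ) = i + k → ∃ w : G.Walk (f i) (f j), w.length = k by
    exact this _ j (by omega)
  intro k
  induction k with
  | zero =>
    intro j hj
    obtain rfl : i = j := Fin.ext (by omega)
    exact ⟨.nil, rfl⟩
  | succ k ih =>
    intro j hj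
    obtain ⟨w, hw⟩ := ih ⟨i + k, by omega⟩ rfl
    exact ⟨w.concat (hf _ _ (by simp only; omega)), by simp [hw]⟩

theorem dist_le_of_adj_succ {n : ℕ} {f : Fin n → V}
    (hf : ∀ i j : Fin n, (i : ℕ) + 1 = j → G.Adj (f i) (f j)) {i j : Fin n}
    (hij : (i : ℕ) ≤ j) : G.dist (f i) (f j) ≤ j - i := by
  obtain ⟨w, hw⟩ := exists_walk_of_adj_succ hf hij
  exact hw ▸ dist_le w

theorem reachable_of_adj_succ {n : ℕ} {f : Fin n → V}
    (hf : ∀ i j : Fin n, (i : ℕ) + 1 = j → G.Adj (f i) (f j)) {i j : Fin n}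
    (hij : (i : ℕ) ≤ j) : G.Reachable (f i) (f j) :=
  (exists_walk_of_adj_succ hf hij).elim fun w _ => ⟨w⟩

theorem le_add_dist_of_forall_adj (f : V → ℤ) (hf : ∀ p q, G.Adj p q → f p ≤ f q + 1)
    (h : G.Reachable a b) : f a ≤ f b + G.dist a b := by
  obtain ⟨w, hw⟩ := h.exists_walk_length_eq_dist
  rw [← hw]
  clear hw h
  induction w with
  | nil => simp
  | cons hadj w ih =>
    rw [Walk.length_cons]
    push_cast
    linarith [hf _ _ hadj]

/-- `G'` keeps the edges of `G` away from `v` and joins `y` to every neighbour of `v` outside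
`S`, so `y` can stand in for `v` on any path of `G` that avoids `S \ {v}`. -/
structure IsBypass (G G' : SimpleGraph V) (S : Set V) (v y : V) : Prop where
  entersOnlyAt : G.EntersOnlyAt S v
  mem : v ∈ S
  adj_of_ne : ∀ ⦃p q⦄, G.Adj p q → p ≠ v → q ≠ v → G'.Adj p q
  adj_of_adj : ∀ ⦃c⦄, G.Adj v c → c ∉ S → G'.Adj y c

namespace IsBypass

theorem exists_walk (h : G.IsBypass G' S v y) {a b : V} (w : G.Walk a b) (hw : w.IsPath)
    (hb : b ∉ S) :
    (a ∉ S → ∃ w' : G'.Walk a b, w'.length ≤ w.length) ∧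
      (a = v → ∃ w' : G'.Walk y b, w'.length ≤ w.length) := by
  induction w with
  | nil => exact ⟨fun _ => ⟨.nil, le_rfl⟩, fun ha => absurd (ha ▸ h.mem) hb⟩
  | @cons a q b hadj w ih =>
    rw [Walk.cons_isPath_iff] at hw
    obtain ⟨ih₁, ih₂⟩ := ih hw.1 hb
    refine ⟨fun ha => ?_, ?_⟩
    · by_cases hq : q = v
      · subst hq
        obtain ⟨w', hw'⟩ := ih₂ rfl
        exact ⟨.cons (h.adj_of_adj hadj.symm ha).symm w', by simpa using hw'⟩
      · have hqS : q ∉ S := fun hqS => ha (h.entersOnlyAt hadj hqS hq)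
        obtain ⟨w', hw'⟩ := ih₁ hqS
        have hav : a ≠ v := fun hav => ha (hav ▸ h.mem)
        exact ⟨.cons (h.adj_of_ne hadj hav hq) w', by simpa using hw'⟩
    · rintro rfl
      -- a path leaving `v` cannot come back to `v`, so it never enters `S \ {v}`
      have hqS : q ∉ S := fun hqS =>
        hw.2 (by simpa using h.entersOnlyAt.mem_support w.reverse hb hqS)
      obtain ⟨w', hw'⟩ := ih₁ hqS
      exact ⟨.cons (h.adj_of_adj hadj hqS) w', by simpa using hw'⟩

theorem exists_walk_length_le_dist (h : G.IsBypass G' S v y) (ha : a ∉ S) (hb : b ∉ S)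
    (hr : G.Reachable a b) : ∃ w' : G'.Walk a b, w'.length ≤ G.dist a b := by
  obtain ⟨w, hw, hlen⟩ := hr.exists_path_of_dist
  exact hlen ▸ (h.exists_walk w hw hb).1 ha

theorem reachable (h : G.IsBypass G' S v y) (ha : a ∉ S) (hb : b ∉ S) (hr : G.Reachable a b) :
    G'.Reachable a b :=
  (h.exists_walk_length_le_dist ha hb hr).elim fun w' _ => ⟨w'⟩

theorem dist_le (h : G.IsBypass G' S v y) (ha : a ∉ S) (hb : b ∉ S) (hr : G.Reachable a b) :
    G'.dist a b ≤ G.dist a b :=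
  (h.exists_walk_length_le_dist ha hb hr).elim fun w' hw' => (SimpleGraph.dist_le w').trans hw'

theorem dist_le_dist (h : G.IsBypass G' S v y) (hb : b ∉ S) (hr : G.Reachable v b) :
    G'.dist y b ≤ G.dist v b := by
  obtain ⟨w, hw, hlen⟩ := hr.exists_path_of_dist
  obtain ⟨w', hw'⟩ := (h.exists_walk w hw hb).2 rfl
  exact (SimpleGraph.dist_le w').trans (hlen ▸ hw')

theorem connected (h : G.IsBypass G' S v y) (hG : G.Connected) (hu : u ∉ S)
    (hvu : G'.Reachable v u) (hS : ∀ a ∈ S, G'.Reachable v a) : G'.Connected :=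
  (connected_iff_exists_forall_reachable _).2 ⟨u, fun a => by
    by_cases ha : a ∈ S
    · exact hvu.symm.trans (hS a ha)
    · exact h.reachable hu ha (hG u a)⟩

end IsBypass

theorem dist_eq_of_pendant_path {C : Set V} (hC : G.EntersOnlyAt C v) {s : ℕ} {z : Fin s → V}
    (hz : Injective z) (hzC : Set.range z = C) (hs : 0 < s) (hzv : z ⟨0, hs⟩ = v)
    (hzadj : ∀ i j, G.Adj (z i) (z j) ↔ (i : ℕ) + 1 = j ∨ (j : ℕ) + 1 = i)
    {i j : Fin s} (hij : (i : ℕ) ≤ j) : G.dist (z i) (z j) = j - i := by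
  have hchain : ∀ i j : Fin s, (i : ℕ) + 1 = j → G.Adj (z i) (z j) :=
    fun i j hij => (hzadj i j).2 (.inl hij)
  -- the index along the path is a 1-Lipschitz function on all of `G`
  set depth : V → ℤ := extend z (fun i => (i : ℤ)) 0
  have hdepth (i : Fin s) : depth (z i) = i := hz.extend_apply _ _ i
  have hout (p : V) (hp : p ∉ C) : depth p = 0 :=
    extend_apply' _ _ _ (by rintro ⟨i, rfl⟩; exact hp (hzC ▸ ⟨i, rfl⟩))
  have hnonneg (p : V) : 0 ≤ depth p := by
    by_cases hp : p ∈ C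
    · obtain ⟨i, rfl⟩ := hzC ▸ hp
      simp [hdepth]
    · simp [hout p hp]
  have hlip (p q : V) (hpq : G.Adj p q) : depth p ≤ depth q + 1 := by
    by_cases hp : p ∈ C
    · by_cases hq : q ∈ C
      · obtain ⟨i, rfl⟩ := hzC ▸ hp
        obtain ⟨j, rfl⟩ := hzC ▸ hq
        rw [hdepth, hdepth]
        rcases (hzadj i j).1 hpq with h | h <;> omega
      · obtain rfl : p = v := by_contra fun hpv => hq (hC hpq.symm hp hpv)
        rw [← hzv, hdepth, hout q hq]
        simp
    · linarith [hout p hp, hnonneg q]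
  have hlow := le_add_dist_of_forall_adj depth hlip (reachable_of_adj_succ hchain hij).symm
  rw [hdepth, hdepth, dist_comm] at hlow
  have hup := dist_le_of_adj_succ hchain hij
  omega

theorem le_dist_of_induce_dist_eq {B : Set V} (hB : G.EntersOnlyAt B u) {t : ℕ} {x : Fin t → V}
    (hxB : ∀ i, x i ∈ B) (ht : 0 < t) (hx0 : x ⟨0, ht⟩ = u)
    (hx : ∀ i j : Fin t, (i : ℕ) + 1 = j → G.Adj (x i) (x j))
    (hgeod : (G.induce B).dist ⟨x ⟨0, ht⟩, hxB _⟩ ⟨x ⟨t - 1, by omega⟩, hxB _⟩ = t - 1)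
    (j : Fin t) : (j : ℕ) ≤ G.dist u (x j) := by
  subst hx0
  set x' : Fin t → B := fun i => ⟨x i, hxB i⟩
  have hx' : ∀ i j : Fin t, (i : ℕ) + 1 = j → (G.induce B).Adj (x' i) (x' j) := hx
  have hjt : (j : ℕ) ≤ (⟨t - 1, by omega⟩ : Fin t) := by simp only; omega
  have h0j : ((⟨0, ht⟩ : Fin t) : ℕ) ≤ j := Nat.zero_le _
  have hrest := dist_le_of_adj_succ hx' hjt
  have htri := (reachable_of_adj_succ hx' hjt).dist_triangle_right (x' ⟨0, ht⟩)
  have hinduce := hB.induce_dist_le (hxB _) (hxB j) (reachable_of_adj_succ hx h0j).symm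
  rw [dist_comm (G := G.induce B)] at hinduce
  rw [dist_comm]
  simp only [x'] at hrest htri
  omega

def moveEdges (G : SimpleGraph V) (W : Set V) (v y : V) : SimpleGraph V :=
  G.deleteEdges {e | ∃ w ∈ W, e = s(v, w)} ⊔ fromEdgeSet {e | ∃ w ∈ W, e = s(y, w)}

section moveEdges

variable {W : Set V}

theorem moveEdges_adj_of_adj {p q : V} (h : G.Adj p q) (hp : p = v → q ∉ W)
    (hq : q = v → p ∉ W) : (G.moveEdges W v y).Adj p q := by
  refine Or.inl (deleteEdges_adj.2 ⟨h, ?_⟩)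
  rintro ⟨w, hw, hpq⟩
  rcases Sym2.eq_iff.1 hpq with ⟨rfl, rfl⟩ | ⟨rfl, rfl⟩
  exacts [hp rfl hw, hq rfl hw]

theorem moveEdges_adj_of_mem {w : V} (hw : w ∈ W) (hyw : y ≠ w) :
    (G.moveEdges W v y).Adj y w :=
  Or.inr ⟨⟨w, hw, rfl⟩, hyw⟩

theorem isBypass_moveEdges (hS : G.EntersOnlyAt S v) (hv : v ∈ S) (hyv : y ≠ v) (hyW : y ∉ W)
    (hN : ∀ c, G.Adj v c → c ∉ S → c ∈ W ∨ G.Adj y c) :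
    G.IsBypass (G.moveEdges W v y) S v y where
  entersOnlyAt := hS
  mem := hv
  adj_of_ne _ _ h hp hq := moveEdges_adj_of_adj h (absurd · hp) (absurd · hq)
  adj_of_adj c h hc := (hN c h hc).elim
    (fun hcW => moveEdges_adj_of_mem hcW fun hyc => hyW (hyc ▸ hcW))
    (fun hyc => moveEdges_adj_of_adj hyc (absurd · hyv) (absurd · h.ne.symm))

end moveEdges

noncomputable def hararyGain (G G' : SimpleGraph V) (p q : V) : ℝ :=
  1 / G'.dist p q - 1 / G.dist p q

theorem hararyGain_comm (p q : V) : hararyGain G G' p q = hararyGain G G' q p := by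
  simp only [hararyGain, dist_comm (u := p)]

theorem hararyGain_nonneg {p q : V} (h : G'.Reachable p q) (hle : G'.dist p q ≤ G.dist p q) :
    0 ≤ hararyGain G G' p q := by
  rcases eq_or_ne p q with rfl | hpq
  · simp [hararyGain]
  · have := h.pos_dist_of_ne hpq
    rw [hararyGain, sub_nonneg]
    gcongr

theorem hararyIndex_sub_hararyIndex [Fintype V] (G G' : SimpleGraph V) :
    hararyIndex G' - hararyIndex G = (∑ p, ∑ q, hararyGain G G' p q) / 2 := by
  simp only [hararyIndex, hararyGain, sum_sub_distrib]
  ring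

theorem sum_Ico_le_sum_hararyGain (hG' : G'.Connected) {p : V} {s n : ℕ} (hsn : s ≤ n)
    {z : Fin s → V} {x : Fin n → V} (hpz : ∀ i, p ≠ z i) (hpx : ∀ k, p ≠ x k) {du dv : ℕ}
    (hdv : 0 < dv) (hzG : ∀ i : Fin s, i + dv ≤ G.dist p (z i))
    (hzG' : ∀ i : Fin s, G'.dist p (z i) ≤ i + 1 + du)
    (hxG : ∀ k : Fin n, k + 1 + du ≤ G.dist p (x k))
    (hxG' : ∀ k : Fin n, G'.dist p (x k) ≤ k + dv) :
    ∑ k ∈ Ico s n, ((1 : ℝ) / (k + dv : ℕ) - 1 / (k + 1 + du : ℕ)) ≤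
      ∑ i, hararyGain G G' p (z i) + ∑ k, hararyGain G G' p (x k) := by
  refine sum_Ico_le_sum_add_sum hsn (fun i => ?_) (fun k => ?_)
  · have := hG'.pos_dist_of_ne (hpz i)
    rw [neg_sub, hararyGain]
    gcongr
    exacts [hzG' i, hzG i]
  · have := hG'.pos_dist_of_ne (hpx k)
    rw [hararyGain]
    gcongr
    exacts [hxG' k, hxG k]

theorem hararyIndex_lt_of_dist_bounds [Fintype V] (hG : G.Connected) (hG' : G'.Connected)
    {P : Set V} (huP : u ∉ P) (hvP : v ∉ P) (huv : G.Adj u v) {w : V} (hwP : w ∈ P)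
    (hvw : G.Adj v w) {s n : ℕ} (hsn : s < n) {z : Fin s → V} {x : Fin n → V}
    (hzx : Injective (Sum.elim z x)) (hzP : ∀ i, z i ∉ P) (hxP : ∀ k, x k ∉ P)
    (hzG : ∀ p ∈ P, ∀ i : Fin s, i + G.dist v p ≤ G.dist p (z i))
    (hzG' : ∀ p ∈ P, ∀ i : Fin s, G'.dist p (z i) ≤ i + 1 + G.dist u p)
    (hxG : ∀ p ∈ P, ∀ k : Fin n, k + 1 + G.dist u p ≤ G.dist p (x k))
    (hxG' : ∀ p ∈ P, ∀ k : Fin n, G'.dist p (x k) ≤ k + G.dist v p)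
    (hrest : ∀ p q, (p ∈ P → q ∉ Set.range z) → (q ∈ P → p ∉ Set.range z) →
      G'.dist p q ≤ G.dist p q) :
    hararyIndex G < hararyIndex G' := by
  classical
  set K : Finset V := univ.map ⟨Sum.elim z x, hzx⟩
  have hzK (i : Fin s) : z i ∈ K := mem_map_of_mem _ (mem_univ (Sum.inl i))
  have hPK : Disjoint P.toFinset K := by
    refine Finset.disjoint_left.2 fun p hp hpK => ?_
    obtain ⟨i | k, -, rfl⟩ := mem_map.1 hpK
    exacts [hzP i (Set.mem_toFinset.1 hp), hxP k (Set.mem_toFinset.1 hp)]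
  have hvp (p : V) (hp : p ∈ P) : 0 < G.dist v p := hG.pos_dist_of_ne fun h => hvP (h ▸ hp)
  have hrow (p : V) (hp : p ∈ P) :
      ∑ k ∈ Ico s n, ((1 : ℝ) / (k + G.dist v p : ℕ) - 1 / (k + 1 + G.dist u p : ℕ)) ≤
        ∑ q ∈ K, hararyGain G G' p q := by
    rw [sum_map, Fintype.sum_sum_type]
    exact sum_Ico_le_sum_hararyGain (z := z) (x := x) hG' hsn.le (fun i h => hzP i (h ▸ hp))
      (fun k h => hxP k (h ▸ hp)) (hvp p hp) (hzG p hp) (hzG' p hp) (hxG p hp) (hxG' p hp)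
  have hvu (p : V) : G.dist v p ≤ G.dist u p + 1 := by
    have := hG.dist_triangle (u := v) (v := u) (w := p)
    rw [dist_eq_one_iff_adj.2 huv.symm] at this
    omega
  have hw : 0 < ∑ k ∈ Ico s n,
      ((1 : ℝ) / (k + G.dist v w : ℕ) - 1 / (k + 1 + G.dist u w : ℕ)) := by
    have hwu : 0 < G.dist u w := hG.pos_dist_of_ne fun h => huP (h ▸ hwP)
    refine sum_pos (fun k _ => one_div_sub_one_div_pos (hvp w hwP) ?_ k) (nonempty_Ico.2 hsn)
    rw [dist_eq_one_iff_adj.2 hvw]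
    exact hwu
  suffices 0 < ∑ p, ∑ q, hararyGain G G' p q by linarith [hararyIndex_sub_hararyIndex G G']
  refine sum_sum_pos_of_nonneg_off_block hararyGain_comm hPK (fun p q hpq hqp => ?_) ?_
  · refine hararyGain_nonneg (hG' p q) (hrest p q ?_ ?_)
    · rintro hp ⟨i, rfl⟩
      exact hpq (Set.mem_toFinset.2 hp) (hzK i)
    · rintro hq ⟨i, rfl⟩
      exact hqp (Set.mem_toFinset.2 hq) (hzK i)
  · refine sum_pos' (fun p hp => ?_) ⟨w, Set.mem_toFinset.2 hwP, hw.trans_le (hrow w hwP)⟩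
    rw [Set.mem_toFinset] at hp
    exact (sum_nonneg fun k _ => one_div_sub_one_div_nonneg (hvp p hp) (hvu p) k).trans (hrow p hp)

/-- The situation of the theorem in graph-theoretic terms: the path `z` fills `C` and hangs from
`v`, the set `B` hangs from `u` and contains a geodesic `x` of `G[B]` that starts at `u`, passes
through `y` and is longer than `z`, and `G'` bypasses `v` through `y`. -/
structure IsPathTrade (G G' : SimpleGraph V) (B C : Set V) (u v y : V) {s t : ℕ}
    (z : Fin s → V) (x : Fin t → V) : Prop where
  connected : G.Connected
  entersOnlyAt_C : G.EntersOnlyAt C v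
  entersOnlyAt_B : G.EntersOnlyAt B u
  isBypass : G.IsBypass G' C v y
  disjoint : ∀ p ∈ B, p ∉ C
  adj : G.Adj u v
  adj' : G'.Adj v u
  exists_adj : ∃ w, w ∉ B ∧ w ∉ C ∧ G.Adj v w
  pos : 0 < s
  injective_z : Injective z
  range_z : Set.range z = C
  z_zero : z ⟨0, pos⟩ = v
  adj_z : ∀ i j, G.Adj (z i) (z j) ↔ (i : ℕ) + 1 = j ∨ (j : ℕ) + 1 = i
  adj_z' : ∀ i j : Fin s, (i : ℕ) + 1 = j → G'.Adj (z i) (z j)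
  length_lt : s + 2 ≤ t
  injective_x : Injective x
  x_zero : x ⟨0, by omega⟩ = u
  x_one : x ⟨1, by omega⟩ = y
  mem_x : ∀ i, x i ∈ B
  adj_x : ∀ i j : Fin t, (i : ℕ) + 1 = j → G.Adj (x i) (x j)
  dist_x : (G.induce B).dist ⟨x ⟨0, by omega⟩, mem_x _⟩ ⟨x ⟨t - 1, by omega⟩, mem_x _⟩ = t - 1

namespace IsPathTrade

variable {B C : Set V} {s t : ℕ} {z : Fin s → V} {x : Fin t → V}

theorem mem_z (h : G.IsPathTrade G' B C u v y z x) (i : Fin s) : z i ∈ C :=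
  h.range_z ▸ Set.mem_range_self i

theorem v_notMem_B (h : G.IsPathTrade G' B C u v y z x) : v ∉ B :=
  fun hvB => h.disjoint v hvB h.isBypass.mem

theorem u_mem_B (h : G.IsPathTrade G' B C u v y z x) : u ∈ B :=
  h.x_zero ▸ h.mem_x _

theorem u_notMem_C (h : G.IsPathTrade G' B C u v y z x) : u ∉ C :=
  h.disjoint u h.u_mem_B

theorem dist_z (h : G.IsPathTrade G' B C u v y z x) {i j : Fin s} (hij : (i : ℕ) ≤ j) :
    G.dist (z i) (z j) = j - i :=
  dist_eq_of_pendant_path h.entersOnlyAt_C h.injective_z h.range_z h.pos h.z_zero h.adj_z hij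

theorem dist_v_z (h : G.IsPathTrade G' B C u v y z x) (i : Fin s) : G.dist v (z i) = i := by
  simpa [h.z_zero] using h.dist_z (i := ⟨0, h.pos⟩) (Nat.zero_le _)

theorem dist_v_z' (h : G.IsPathTrade G' B C u v y z x) (i : Fin s) : G'.dist v (z i) ≤ i := by
  simpa [h.z_zero] using dist_le_of_adj_succ h.adj_z' (i := ⟨0, h.pos⟩) (j := i) (Nat.zero_le _)

theorem connected' (h : G.IsPathTrade G' B C u v y z x) : G'.Connected :=
  h.isBypass.connected h.connected h.u_notMem_C h.adj'.reachable fun a ha => by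
    obtain ⟨i, rfl⟩ := h.range_z ▸ ha
    exact h.z_zero ▸ reachable_of_adj_succ h.adj_z' (i := ⟨0, h.pos⟩) (Nat.zero_le _)

theorem dist_z_z_le (h : G.IsPathTrade G' B C u v y z x) (i j : Fin s) :
    G'.dist (z i) (z j) ≤ G.dist (z i) (z j) := by
  rcases le_total (i : ℕ) j with hij | hij
  · exact h.dist_z hij ▸ dist_le_of_adj_succ h.adj_z' hij
  · rw [dist_comm, dist_comm (G := G)]
    exact h.dist_z hij ▸ dist_le_of_adj_succ h.adj_z' hij

theorem dist_B_z_le (h : G.IsPathTrade G' B C u v y z x) {q : V} (hq : q ∈ B) (i : Fin s) :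
    G'.dist q (z i) ≤ G.dist q (z i) := by
  have hG := h.connected
  have hqC := h.disjoint q hq
  refine h.entersOnlyAt_C.dist_le_of_dist_le h.connected' hqC (h.mem_z i) (hG _ _) ?_
    (by simpa [h.z_zero] using h.dist_z_z_le ⟨0, h.pos⟩ i)
  rw [dist_comm, dist_comm (G := G)]
  refine h.entersOnlyAt_B.dist_le_of_dist_le h.connected' h.v_notMem_B hq (hG _ _) ?_
    (h.isBypass.dist_le h.u_notMem_C hqC (hG _ _))
  rw [dist_eq_one_iff_adj.2 h.adj', dist_eq_one_iff_adj.2 h.adj.symm]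

/-- Only distances between `C` and vertices outside `B ∪ C` can grow. -/
theorem dist_le (h : G.IsPathTrade G' B C u v y z x) {p q : V}
    (hpq : p ∉ B ∧ p ∉ C → q ∉ C) (hqp : q ∉ B ∧ q ∉ C → p ∉ C) :
    G'.dist p q ≤ G.dist p q := by
  by_cases hp : p ∈ C <;> by_cases hq : q ∈ C
  · obtain ⟨i, rfl⟩ := h.range_z ▸ hp
    obtain ⟨j, rfl⟩ := h.range_z ▸ hq
    exact h.dist_z_z_le i j
  · obtain ⟨i, rfl⟩ := h.range_z ▸ hp
    rw [dist_comm, dist_comm (G := G)]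
    exact h.dist_B_z_le (by_contra fun hqB => hqp ⟨hqB, hq⟩ hp) i
  · obtain ⟨j, rfl⟩ := h.range_z ▸ hq
    exact h.dist_B_z_le (by_contra fun hpB => hpq ⟨hpB, hp⟩ hq) j
  · exact h.isBypass.dist_le hp hq (h.connected p q)

theorem le_dist_z (h : G.IsPathTrade G' B C u v y z x) {p : V} (hp : p ∉ C) (i : Fin s) :
    i + G.dist v p ≤ G.dist p (z i) := by
  have hcut := h.entersOnlyAt_C.dist_add_dist_le hp (h.mem_z i) (h.connected p (z i))
  rw [h.dist_v_z, dist_comm (u := p)] at hcut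
  omega

theorem dist_z_le' (h : G.IsPathTrade G' B C u v y z x) {p : V} (hp : p ∉ C) (i : Fin s) :
    G'.dist p (z i) ≤ i + 1 + G.dist u p := by
  have hG' := h.connected'
  have htri₁ : G'.dist p (z i) ≤ G'.dist p v + G'.dist v (z i) := hG'.dist_triangle
  have htri₂ : G'.dist p v ≤ G'.dist p u + 1 :=
    dist_eq_one_iff_adj.2 h.adj'.symm ▸ hG'.dist_triangle
  have hpu := h.isBypass.dist_le hp h.u_notMem_C (h.connected p u)
  rw [dist_comm (G := G) (u := p)] at hpu
  have := h.dist_v_z' i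
  omega

theorem le_dist_x (h : G.IsPathTrade G' B C u v y z x) {p : V} (hp : p ∉ B) (j : Fin t) :
    j + G.dist u p ≤ G.dist p (x j) := by
  have hcut := h.entersOnlyAt_B.dist_add_dist_le hp (h.mem_x j) (h.connected p _)
  have hgeod := le_dist_of_induce_dist_eq h.entersOnlyAt_B h.mem_x (by have := h.length_lt; omega)
    h.x_zero h.adj_x h.dist_x j
  rw [dist_comm (u := p)] at hcut
  omega

theorem dist_x_le' (h : G.IsPathTrade G' B C u v y z x) {p : V} (hp : p ∉ C) (j : Fin t)
    (hj : 0 < (j : ℕ)) : G'.dist p (x j) + 1 ≤ j + G.dist v p := by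
  have htri : G'.dist p (x j) ≤ G'.dist y p + G'.dist y (x j) :=
    dist_comm (u := y) ▸ h.connected'.dist_triangle
  have hpy := h.isBypass.dist_le_dist hp (h.connected v p)
  have hx' (i j : Fin t) (hij : (i : ℕ) + 1 = j) : G'.Adj (x i) (x j) :=
    h.isBypass.adj_of_ne (h.adj_x i j hij) (fun hv => h.v_notMem_B (hv ▸ h.mem_x i))
      (fun hv => h.v_notMem_B (hv ▸ h.mem_x j))
  have hchain : G'.dist y (x j) ≤ j - 1 := by
    simpa [h.x_one] using dist_le_of_adj_succ hx' (i := ⟨1, by have := h.length_lt; omega⟩)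
      (j := j) hj
  omega

theorem hararyIndex_lt [Fintype V] (h : G.IsPathTrade G' B C u v y z x) :
    hararyIndex G < hararyIndex G' := by
  have hst := h.length_lt
  obtain ⟨w, hwB, hwC, hvw⟩ := h.exists_adj
  let x' : Fin (t - 1) → V := fun k => x ⟨k + 1, by omega⟩
  have hx' : Injective x' := fun k l hkl => Fin.ext (by simpa using h.injective_x hkl)
  refine hararyIndex_lt_of_dist_bounds h.connected h.connected' (P := {p | p ∉ B ∧ p ∉ C})
    (fun hu => hu.1 h.u_mem_B) (fun hv => hv.2 h.isBypass.mem) h.adj ⟨hwB, hwC⟩ hvw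
    (by omega) (h.injective_z.sumElim hx' fun i k hik => h.disjoint _ (h.mem_x _) (hik ▸ h.mem_z i))
    (fun i hi => hi.2 (h.mem_z i)) (fun k hk => hk.1 (h.mem_x _))
    (fun p hp => h.le_dist_z hp.2) (fun p hp => h.dist_z_le' hp.2)
    (fun p hp k => h.le_dist_x hp.1 ⟨k + 1, by omega⟩) (fun p hp k => ?_)
    fun p q hpz hqz => h.dist_le (fun hp hq => ?_) (fun hq hp => ?_)
  · have := h.dist_x_le' hp.2 ⟨k + 1, by omega⟩ (Nat.succ_pos _)
    change G'.dist p (x ⟨k + 1, _⟩) ≤ _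
    simp only at this
    omega
  · obtain ⟨i, rfl⟩ := h.range_z ▸ hq
    exact hpz hp ⟨i, rfl⟩
  · obtain ⟨i, rfl⟩ := h.range_z ▸ hp
    exact hqz hq ⟨i, rfl⟩

end IsPathTrade

end SimpleGraph

/-- Lemma 2.2 of the paper.  `G` is connected, with `V(G) = A ∪ B ∪ C`,
`A ∩ B = {u}`, `A ∩ C = {v}`, `B ∩ C = ∅`, every edge inside `A`, `B` or `C`;
`uv ∈ E(G)`; `u` and `v` have the same neighbourhood `W ≠ ∅` inside `A` (besides each
other); `G[C]` is a path `v = z_1, …, z_s`; `G[B]` contains a path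
`u = x_1, …, x_t` (`t ≥ s + 2`) which is a shortest `x_1,x_t`-path in `G[B]`.
Moving the edges from `v` to `W` so that they join `x_2` to `W` increases the
Harary index. -/
theorem harary_lt_move_common_neighbors {V : Type*} [Fintype V] (G : SimpleGraph V)
    (hG : G.Connected) (A B C : Set V) (u v : V)
    (hAB : A ∩ B = {u}) (hAC : A ∩ C = {v}) (hBC : B ∩ C = ∅)
    (hedge : ∀ x y, G.Adj x y →
      (x ∈ A ∧ y ∈ A) ∨ (x ∈ B ∧ y ∈ B) ∨ (x ∈ C ∧ y ∈ C))
    (huv : G.Adj u v)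
    (W : Set V) (hWne : W.Nonempty)
    (hWv : G.neighborSet v ∩ (A \ {u}) = W)
    (s : ℕ) (hs : 1 ≤ s)
    (z : Fin s → V) (hzinj : Function.Injective z)
    (hz0 : z ⟨0, by omega⟩ = v) (hzC : Set.range z = C)
    (hzadj : ∀ i j : Fin s,
      G.Adj (z i) (z j) ↔ ((i : ℕ) + 1 = (j : ℕ) ∨ (j : ℕ) + 1 = (i : ℕ)))
    (t : ℕ) (hts : s + 2 ≤ t)
    (x : Fin t → V) (hxinj : Function.Injective x)
    (hx0 : x ⟨0, by omega⟩ = u) (hxB : ∀ i, x i ∈ B)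
    (hxpath : ∀ i j : Fin t, (i : ℕ) + 1 = (j : ℕ) → G.Adj (x i) (x j))
    (hshortest : (G.induce B).dist ⟨x ⟨0, by omega⟩, hxB _⟩ ⟨x ⟨t - 1, by omega⟩, hxB _⟩
      = t - 1) :
    hararyIndex G <
      hararyIndex ((G.deleteEdges {e | ∃ w ∈ W, e = s(v, w)}) ⊔
        SimpleGraph.fromEdgeSet {e | ∃ w ∈ W, e = s(x ⟨1, by omega⟩, w)}) := by
  have hAB' {p : V} (hpA : p ∈ A) (hpB : p ∈ B) : p = u := (hAB ▸ ⟨hpA, hpB⟩ : p ∈ ({u} : Set V))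
  have hAC' {p : V} (hpA : p ∈ A) (hpC : p ∈ C) : p = v := (hAC ▸ ⟨hpA, hpC⟩ : p ∈ ({v} : Set V))
  have hvB : v ∉ B := fun hvB => huv.ne (hAB' (hAC ▸ rfl : v ∈ A ∩ C).1 hvB).symm
  have hW (w : V) (hw : w ∈ W) : G.Adj v w ∧ w ∈ A ∧ w ≠ u := by
    rw [← hWv] at hw
    exact ⟨hw.1, hw.2.1, hw.2.2⟩
  have hWB (w : V) (hw : w ∈ W) : w ∉ B := fun hwB => (hW w hw).2.2 (hAB' (hW w hw).2.1 hwB)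
  have hWC (w : V) (hw : w ∈ W) : w ∉ C := fun hwC =>
    (hW w hw).1.ne (hAC' (hW w hw).2.1 hwC).symm
  have hC : G.EntersOnlyAt C v :=
    entersOnlyAt_of_forall_adj hedge hAC.subset (hBC ▸ Set.empty_subset _)
  have hB : G.EntersOnlyAt B u :=
    entersOnlyAt_of_forall_adj (fun p q h => (hedge p q h).imp_right Or.symm) hAB.subset
      (by rw [Set.inter_comm, hBC]; exact Set.empty_subset _)
  have hbyp : G.IsBypass (G.moveEdges W v (x ⟨1, by omega⟩)) C v (x ⟨1, by omega⟩) := by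
    refine isBypass_moveEdges hC (hAC ▸ rfl : v ∈ A ∩ C).2 (fun h => hvB (h ▸ hxB _))
      (fun hyW => hWB _ hyW (hxB _)) fun c hvc hc => ?_
    by_cases hcu : c = u
    · exact .inr (hcu ▸ (hx0 ▸ hxpath ⟨0, by omega⟩ ⟨1, by omega⟩ rfl).symm)
    · rcases hedge v c hvc with ⟨-, hcA⟩ | ⟨hvB', -⟩ | ⟨-, hcC⟩
      · exact .inl (hWv ▸ ⟨hvc, hcA, hcu⟩)
      · exact absurd hvB' hvB
      · exact absurd hcC hc
  obtain ⟨w, hw⟩ := hWne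
  exact IsPathTrade.hararyIndex_lt
    { connected := hG
      entersOnlyAt_C := hC
      entersOnlyAt_B := hB
      isBypass := hbyp
      disjoint := fun p hpB hpC => (hBC ▸ ⟨hpB, hpC⟩ : p ∈ (∅ : Set V))
      adj := huv
      adj' := moveEdges_adj_of_adj huv.symm (fun _ hu => (hW u hu).2.2 rfl) (absurd · huv.ne)
      exists_adj := ⟨w, hWB w hw, hWC w hw, (hW w hw).1⟩
      pos := hs
      injective_z := hzinj
      range_z := hzC
      z_zero := hz0
      adj_z := hzadj
      adj_z' := fun i j h => moveEdges_adj_of_adj ((hzadj i j).2 (.inl h))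
        (fun _ hw => hWC _ hw (hzC ▸ ⟨j, rfl⟩)) (fun _ hw => hWC _ hw (hzC ▸ ⟨i, rfl⟩))
      length_lt := hts
      injective_x := hxinj
      x_zero := hx0
      x_one := rfl
      mem_x := hxB
      adj_x := hxpath
      dist_x := hshortest }
end

section
/- Let G be a finite connected simple graph containing vertex subsets P and Q with |P| = p ≥ 3, |Q| = q ≥ 3 and P ∩ Q = {u}, such that P and Q each induce complete subgraphs of G. Suppose G is obtained from this union of two cliques sharing the vertex u by: attaching a path P_t (t ≥ 1) at a vertex w_1 ∈ P ∖ {u}, attaching a path P_s (s ≥ 1) at a vertex v_1 ∈ Q ∖ {u}, and, for each vertex x ∈ (P ∪ Q) ∖ {u, v_1, w_1}, possibly attaching a connected graph H_x meeting the rest of G only in the vertex x; assume t ≥ s. Let G′ be the graph obtained from G by deleting every edge v_1y with y ∈ Q ∖ {u, v_1} and adding every edge zy with z ∈ Q ∖ {v_1}, y ∈ P, z ≠ y, for which zy is not already an edge. Then H(G) < H(G′). -/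
open SimpleGraph

/-!
Every vertex `a` hangs from a vertex `g a` of the core `P ∪ Q`, at depth `n a = d(a, g a)`.
Between different branches `d(a, b) = n a + d(g a, g b) + n b`, in `G` and in `G'` alike, and
inside a branch nothing changes.  On the core both distances take only the values `1` and `2`:
passing to `G'`, pairs in `(P \ {u}) × (Q \ {u, v₁})` move from `2` to `1`, pairs in
`{v₁} × (Q \ {u, v₁})` from `1` to `2`, and nothing else changes.  So for each `b` hanging from
`Q \ {u, v₁}` the change is `∑ₐ ± (1/(n a + n b + 1) - 1/(n a + n b + 2))`, with `+` for the
branches at `P \ {u}` and `-` for the path `P_s` at `v₁`.  The vertices of `P_s` at depths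
`0, …, s - 1` are matched by the first `s` vertices of `P_t` at `w₁` (here `s ≤ t`), and a
further vertex of `P \ {u, w₁}` at depth `0` makes the total strictly positive.
-/

/-- The gain in `1 / d` when a distance `m + 2` drops to `m + 1`. -/
noncomputable def invGap (m : ℕ) : ℝ := 1 / ((m : ℝ) + 1) - 1 / ((m : ℝ) + 2)

lemma invGap_pos (m : ℕ) : 0 < invGap m := by
  unfold invGap
  have : (0 : ℝ) < m + 1 := by positivity
  rw [sub_pos]
  exact one_div_lt_one_div_of_lt this (by linarith)

lemma one_div_sub_one_div_eq_invGap {k k' : ℕ} (hk : 1 ≤ k) (hk₂ : k ≤ 2) (hk' : 1 ≤ k')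
    (hk'₂ : k' ≤ 2) (m : ℕ) :
    1 / ((m + k' : ℕ) : ℝ) - 1 / ((m + k : ℕ) : ℝ) = ((k : ℝ) - k') * invGap m := by
  interval_cases k <;> interval_cases k' <;> simp [invGap] <;> ring

lemma sum_sum_mul_pos {α : Type*} [Fintype α] (τ ι : α → ℝ) (n : α → ℕ) (f : ℕ → ℝ)
    (hι : ∀ b, 0 ≤ ι b) {b₀ : α} (hb₀ : 0 < ι b₀) (hτ : ∀ m, 0 < ∑ a, τ a * f (n a + m)) :
    0 < ∑ a, ∑ b, (τ a * ι b + τ b * ι a) * f (n a + n b) := by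
  have hpos : 0 < ∑ b, ι b * ∑ a, τ a * f (n a + n b) :=
    Finset.sum_pos' (fun b _ => mul_nonneg (hι b) (hτ _).le)
      ⟨b₀, Finset.mem_univ _, mul_pos hb₀ (hτ _)⟩
  have hswap : ∑ a, ∑ b, τ a * ι b * f (n a + n b) = ∑ b, ι b * ∑ a, τ a * f (n a + n b) := by
    rw [Finset.sum_comm]
    simp only [Finset.mul_sum]
    exact Finset.sum_congr rfl fun b _ => Finset.sum_congr rfl fun a _ => by ring
  have hsymm : ∑ a, ∑ b, τ b * ι a * f (n a + n b) = ∑ b, ι b * ∑ a, τ a * f (n a + n b) := by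
    simp only [Finset.mul_sum]
    exact Finset.sum_congr rfl fun b _ => Finset.sum_congr rfl fun a _ => by
      rw [add_comm (n b)]; ring
  simp only [add_mul, Finset.sum_add_distrib, hswap, hsymm]
  linarith

namespace SimpleGraph

variable {V W : Type*} {G G' : SimpleGraph V}

lemma Connected.of_adj_reachable (hG : G.Connected) (h : ∀ a b, G.Adj a b → G'.Reachable a b) :
    G'.Connected := by
  refine (connected_iff G').2 ⟨fun a b => ?_, hG.nonempty⟩
  obtain ⟨p⟩ := hG.preconnected a b
  induction p with
  | nil => rfl
  | cons hadj _ ih => exact (h _ _ hadj).trans ih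

lemma exists_walk_map_length_le {H : SimpleGraph W} {f : V → W}
    (hf : ∀ a b, G.Adj a b → f a = f b ∨ H.Adj (f a) (f b)) {a b : V} (p : G.Walk a b) :
    ∃ q : H.Walk (f a) (f b), q.length ≤ p.length := by
  induction p with
  | nil => exact ⟨.nil, le_rfl⟩
  | @cons a c b hac p ih =>
    obtain ⟨q, hq⟩ := ih
    rcases hf a c hac with h | h
    · exact ⟨q.copy h.symm rfl, by simp; omega⟩
    · exact ⟨.cons h q, by simpa using hq⟩

lemma dist_map_le {H : SimpleGraph W} {f : V → W}
    (hf : ∀ a b, G.Adj a b → f a = f b ∨ H.Adj (f a) (f b)) {a b : V} (hab : G.Reachable a b) :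
    H.dist (f a) (f b) ≤ G.dist a b := by
  obtain ⟨p, hp⟩ := hab.exists_walk_length_eq_dist
  obtain ⟨q, hq⟩ := exists_walk_map_length_le hf p
  exact (dist_le q).trans (hp ▸ hq)

lemma sub_le_dist {φ : V → ℤ} (hφ : ∀ a b, G.Adj a b → φ a ≤ φ b + 1) {a b : V}
    (hab : G.Reachable a b) : φ a - φ b ≤ G.dist a b := by
  obtain ⟨p, hp⟩ := hab.exists_walk_length_eq_dist
  rw [← hp]
  clear hp hab
  induction p with
  | nil => simp
  | @cons a c b hac p ih =>
    have := hφ a c hac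
    push_cast [Walk.length_cons]
    omega

lemma dist_eq_add_of_forall_adj {S : Set V} {x : V} (hG : G.Connected)
    (hS : ∀ a b, G.Adj a b → a ∈ S → b ∉ S → a = x) {a b : V} (ha : a ∈ S) (hb : b ∉ S) :
    G.dist a b = G.dist a x + G.dist x b := by
  classical
  refine le_antisymm hG.dist_triangle ?_
  obtain ⟨p, hp⟩ := hG.exists_walk_length_eq_dist a b
  obtain ⟨d, hd, hdS, hdS'⟩ := p.exists_boundary_dart S ha hb
  have hx : x ∈ p.support := hS _ _ d.adj hdS hdS' ▸ p.dart_fst_mem_support_of_mem_darts hd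
  rw [← hp, ← p.take_spec hx, Walk.length_append]
  exact add_le_add (dist_le _) (dist_le _)

/-- `g` retracts `V` onto its fixed points, and each fibre of `g` is attached to the rest of the
graph only through the fixed point it contains. -/
structure IsGate (G : SimpleGraph V) (g : V → V) : Prop where
  idem : ∀ a, g (g a) = g a
  eq_of_adj : ∀ ⦃a b⦄, G.Adj a b → g a ≠ g b → g a = a

namespace IsGate

variable {g : V → V}

lemma eq_of_adj_of_mem_fiber (hg : G.IsGate g) (x : V) {a b : V} (hab : G.Adj a b)
    (ha : g a = x) (hb : g b ≠ x) : a = x :=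
  ha ▸ (hg.eq_of_adj hab (ha ▸ hb.symm)).symm

lemma dist_eq_add (hG : G.Connected) (hg : G.IsGate g) {a b : V} (hab : g a ≠ g b) :
    G.dist a b = G.dist a (g a) + G.dist (g a) (g b) + G.dist (g b) b := by
  have h₁ := dist_eq_add_of_forall_adj (S := {c | g c = g a}) hG
    (fun _ _ h hc hd => hg.eq_of_adj_of_mem_fiber _ h hc hd) rfl hab.symm
  have h₂ := dist_eq_add_of_forall_adj (S := {c | g c = g b}) hG
    (fun _ _ h hc hd => hg.eq_of_adj_of_mem_fiber _ h hc hd) rfl (b := g a) (by simpa [hg.idem])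
  have := G.dist_comm (u := g a) (v := b)
  have := G.dist_comm (u := g a) (v := g b)
  have := G.dist_comm (u := g b) (v := b)
  omega

/-- Collapsing everything outside the fibre of `g a` to `g a` shortens no walk of `G'`. -/
lemma dist_le_of_gate_eq (hG' : G'.Connected) (hg' : G'.IsGate g)
    (hagree : ∀ a b, g a = g b → G'.Adj a b → G.Adj a b) {a b : V} (hab : g a = g b) :
    G.dist a b ≤ G'.dist a b := by
  classical
  let ρ : V → V := fun c => if g c = g a then c else g a
  have hρ : ∀ c d, G'.Adj c d → ρ c = ρ d ∨ G.Adj (ρ c) (ρ d) := by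
    intro c d hcd
    by_cases hc : g c = g a <;> by_cases hd : g d = g a
    · exact .inr (by simpa [ρ, hc, hd] using hagree c d (hc.trans hd.symm) hcd)
    · exact .inl (by simp [ρ, hd, hg'.eq_of_adj_of_mem_fiber _ hcd hc hd])
    · exact .inl (by simp [ρ, hc, hg'.eq_of_adj_of_mem_fiber _ hcd.symm hd hc])
    · exact .inl (by simp [ρ, hc, hd])
  simpa [ρ, hab] using dist_map_le hρ (hG'.preconnected a b)

lemma dist_eq_of_gate_eq (hG : G.Connected) (hG' : G'.Connected) (hg : G.IsGate g)
    (hg' : G'.IsGate g) (hagree : ∀ a b, g a = g b → (G.Adj a b ↔ G'.Adj a b)) {a b : V}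
    (hab : g a = g b) : G.dist a b = G'.dist a b :=
  le_antisymm (dist_le_of_gate_eq hG' hg' (fun a b h => (hagree a b h).2) hab)
    (dist_le_of_gate_eq hG hg (fun a b h => (hagree a b h).1) hab)

lemma one_div_dist_sub_one_div_dist (hG : G.Connected) (hG' : G'.Connected) (hg : G.IsGate g)
    (hg' : G'.IsGate g) (hagree : ∀ a b, g a = g b → (G.Adj a b ↔ G'.Adj a b))
    (h₂ : ∀ a b, G.dist (g a) (g b) ≤ 2) (h₂' : ∀ a b, G'.dist (g a) (g b) ≤ 2) (a b : V) :
    1 / (G'.dist a b : ℝ) - 1 / G.dist a b =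
      ((G.dist (g a) (g b) : ℝ) - G'.dist (g a) (g b)) *
        invGap (G.dist a (g a) + G.dist b (g b)) := by
  have hdist : ∀ {a b}, g a = g b → G.dist a b = G'.dist a b :=
    dist_eq_of_gate_eq hG hG' hg hg' hagree
  by_cases hab : g a = g b
  · simp [hdist hab, hab]
  have hna : G'.dist a (g a) = G.dist a (g a) := (hdist (hg.idem a).symm).symm
  have hnb : G'.dist (g b) b = G.dist (g b) b := (hdist (hg.idem b)).symm
  rw [hg.dist_eq_add hG hab, hg'.dist_eq_add hG' hab, hna, hnb, G.dist_comm (u := g b)]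
  simp only [Nat.add_right_comm _ _ (G.dist b (g b))]
  exact one_div_sub_one_div_eq_invGap (hG.pos_dist_of_ne hab) (h₂ a b)
    (hG'.pos_dist_of_ne hab) (h₂' a b) _

end IsGate

open Classical in
lemma dist_eq_of_forall_adj {K : Set V} {u : V} (hu : ∀ y ∈ K, y ≠ u → G.Adj u y) {x y : V}
    (hx : x ∈ K) (hy : y ∈ K) : G.dist x y = if x = y then 0 else if G.Adj x y then 1 else 2 := by
  split_ifs with hxy hadj
  · simp [hxy]
  · exact dist_eq_one_iff_adj.2 hadj
  have hxu : x ≠ u := by rintro rfl; exact hadj (hu y hy (Ne.symm hxy))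
  have hyu : y ≠ u := by rintro rfl; exact hadj (hu x hx hxu).symm
  let p : G.Walk x y := .cons (hu x hx hxu).symm (.cons (hu y hy hyu) .nil)
  have := p.reachable.one_lt_dist_of_ne_of_not_adj hxy hadj
  have := dist_le p
  simp only [p, Walk.length_cons, Walk.length_nil] at this
  omega

lemma dist_le_two_of_forall_adj {K : Set V} {u : V} (hu : ∀ y ∈ K, y ≠ u → G.Adj u y) {x y : V}
    (hx : x ∈ K) (hy : y ∈ K) : G.dist x y ≤ 2 := by
  rw [dist_eq_of_forall_adj hu hx hy]
  split_ifs <;> omega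

lemma dist_apply_apply_zero {t : ℕ} (ht : 0 < t) {w : Fin t → V} (hG : G.Connected)
    (hw : Function.Injective w)
    (hpath : ∀ i j, G.Adj (w i) (w j) ↔ (i : ℕ) + 1 = j ∨ (j : ℕ) + 1 = i)
    (hcut : ∀ a b, G.Adj a b → a ∈ Set.range w → b ∉ Set.range w → a = w ⟨0, ht⟩) (j : Fin t) :
    G.dist (w j) (w ⟨0, ht⟩) = j := by
  classical
  have hle : ∀ k (hk : k < t), G.dist (w ⟨k, hk⟩) (w ⟨0, ht⟩) ≤ k := by
    intro k hk
    induction k with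
    | zero => simp
    | succ k ih =>
      have hadj : G.Adj (w ⟨k + 1, hk⟩) (w ⟨k, by omega⟩) := (hpath _ _).2 (.inr rfl)
      have := hG.dist_triangle (u := w ⟨k + 1, hk⟩) (v := w ⟨k, by omega⟩) (w := w ⟨0, ht⟩)
      rw [dist_eq_one_iff_adj.2 hadj] at this
      have := ih (by omega)
      omega
  have : Nonempty (Fin t) := ⟨⟨0, ht⟩⟩
  -- the position along the path is a potential that changes by at most one along each edge
  let φ : V → ℤ := fun v => if v ∈ Set.range w then ((Function.invFun w v : Fin t) : ℕ) else 0
  have hφw : ∀ i, φ (w i) = i := fun i => by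
    simp [φ, Function.leftInverse_invFun hw i]
  have hφ : ∀ a b, G.Adj a b → φ a ≤ φ b + 1 := by
    have hφ₀ : ∀ v, 0 ≤ φ v := fun v => by unfold φ; split_ifs <;> simp
    intro a b hab
    by_cases ha : a ∈ Set.range w
    · obtain ⟨i, rfl⟩ := ha
      by_cases hb : b ∈ Set.range w
      · obtain ⟨j, rfl⟩ := hb
        rw [hφw, hφw]
        rcases (hpath i j).1 hab with h | h <;> omega
      · rw [hcut _ _ hab ⟨i, rfl⟩ hb, hφw, Fin.val_mk, Nat.cast_zero]
        linarith [hφ₀ b]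
    · simp only [φ, if_neg ha]
      linarith [hφ₀ b]
  have := sub_le_dist hφ (hG.preconnected (w j) (w ⟨0, ht⟩))
  rw [hφw, hφw] at this
  have := hle j j.2
  simp only [Fin.eta] at this
  push_cast at *
  omega

structure IsHangingPath (G : SimpleGraph V) (g : V → V) {t : ℕ} (ht : 0 < t) (w : Fin t → V) :
    Prop where
  injective : Function.Injective w
  adj_iff : ∀ i j, G.Adj (w i) (w j) ↔ (i : ℕ) + 1 = j ∨ (j : ℕ) + 1 = i
  gate_eq_iff : ∀ a, g a = w ⟨0, ht⟩ ↔ a ∈ Set.range w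

lemma IsHangingPath.dist_gate {g : V → V} {t : ℕ} {ht : 0 < t} {w : Fin t → V}
    (hw : G.IsHangingPath g ht w) (hG : G.Connected) (hg : G.IsGate g) (i : Fin t) :
    G.dist (w i) (g (w i)) = i := by
  rw [(hw.gate_eq_iff _).2 ⟨i, rfl⟩]
  exact dist_apply_apply_zero ht hG hw.injective hw.adj_iff (fun a b hab ha hb =>
    hg.eq_of_adj_of_mem_fiber _ hab ((hw.gate_eq_iff a).2 ha) (mt (hw.gate_eq_iff b).1 hb)) i

end SimpleGraph

section MergeCliques

variable {V : Type*}

def mergeCliques (G : SimpleGraph V) (P Q : Set V) (u v : V) : SimpleGraph V :=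
  G.deleteEdges {e | ∃ y ∈ Q \ {u, v}, e = s(v, y)} ⊔
    fromEdgeSet {e | ∃ a ∈ Q \ {v}, ∃ b ∈ P, e = s(a, b)}

lemma mergeCliques_adj {G : SimpleGraph V} {P Q : Set V} {u v a b : V} :
    (mergeCliques G P Q u v).Adj a b ↔
      G.Adj a b ∧ ¬(a = v ∧ b ∈ Q \ {u, v} ∨ b = v ∧ a ∈ Q \ {u, v}) ∨
        a ≠ b ∧ (a ∈ Q \ {v} ∧ b ∈ P ∨ b ∈ Q \ {v} ∧ a ∈ P) := by
  simp only [mergeCliques, sup_adj, deleteEdges_adj, fromEdgeSet_adj, Set.mem_ofPred_eq,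
    Sym2.eq_iff]
  constructor
  · rintro (⟨h, hD⟩ | ⟨⟨c, hc, d, hd, he⟩, hne⟩)
    · exact .inl ⟨h, fun h' => hD (by rcases h' with ⟨rfl, hb⟩ | ⟨rfl, ha⟩ <;> aesop)⟩
    · exact .inr ⟨hne, by aesop⟩
  · rintro (⟨h, hD⟩ | ⟨hne, hE⟩)
    · exact .inl ⟨h, by aesop⟩
    · exact .inr ⟨by aesop, hne⟩

/-- `G` is made of the cliques `P` and `Q` meeting in `u`, with the rest of `G` hanging from their
vertices: `g a` is the vertex of `P ∪ Q` from which `a` hangs. -/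
structure TwoCliqueGate (G : SimpleGraph V) (P Q : Set V) (u : V) (g : V → V) : Prop where
  inter_eq : P ∩ Q = {u}
  isClique_left : G.IsClique P
  isClique_right : G.IsClique Q
  gate_mem : ∀ a, g a ∈ P ∪ Q
  gate_eq_self : ∀ x ∈ P ∪ Q, g x = x
  adj : ∀ ⦃a b⦄, G.Adj a b → g a = g b ∨ a ∈ P ∧ b ∈ P ∨ a ∈ Q ∧ b ∈ Q

namespace TwoCliqueGate

variable {G : SimpleGraph V} {P Q : Set V} {u v : V} {g : V → V}

lemma u_mem_left (h : TwoCliqueGate G P Q u g) : u ∈ P := (h.inter_eq.symm ▸ rfl : u ∈ P ∩ Q).1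

lemma u_mem_right (h : TwoCliqueGate G P Q u g) : u ∈ Q := (h.inter_eq.symm ▸ rfl : u ∈ P ∩ Q).2

lemma eq_of_mem_of_mem (h : TwoCliqueGate G P Q u g) {x : V} (hP : x ∈ P) (hQ : x ∈ Q) : x = u :=
  (Set.ext_iff.1 h.inter_eq x).1 ⟨hP, hQ⟩

lemma notMem_left (h : TwoCliqueGate G P Q u g) {x : V} (hQ : x ∈ Q) (hxu : x ≠ u) : x ∉ P :=
  fun hP => hxu (h.eq_of_mem_of_mem hP hQ)

lemma isGate (h : TwoCliqueGate G P Q u g) : G.IsGate g where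
  idem a := h.gate_eq_self _ (h.gate_mem a)
  eq_of_adj a b hab hne := by
    rcases h.adj hab with h' | ⟨ha, -⟩ | ⟨ha, -⟩
    · exact absurd h' hne
    · exact h.gate_eq_self a (.inl ha)
    · exact h.gate_eq_self a (.inr ha)

lemma mem_cases (h : TwoCliqueGate G P Q u g) (v : V) {x : V} (hx : x ∈ P ∪ Q) :
    x = u ∨ x = v ∨ (x ∈ P ∧ x ∉ Q ∧ x ≠ u ∧ x ≠ v) ∨ (x ∈ Q ∧ x ∉ P ∧ x ≠ u ∧ x ≠ v) := by
  by_cases hxu : x = u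
  · exact .inl hxu
  by_cases hxv : x = v
  · exact .inr (.inl hxv)
  rcases hx with hx | hx
  · exact .inr (.inr (.inl ⟨hx, fun hQ => hxu (h.eq_of_mem_of_mem hx hQ), hxu, hxv⟩))
  · exact .inr (.inr (.inr ⟨hx, fun hP => hxu (h.eq_of_mem_of_mem hP hx), hxu, hxv⟩))

lemma adj_iff (h : TwoCliqueGate G P Q u g) {x y : V} (hx : x ∈ P ∪ Q) (hy : y ∈ P ∪ Q) :
    G.Adj x y ↔ x ≠ y ∧ (x ∈ P ∧ y ∈ P ∨ x ∈ Q ∧ y ∈ Q) := by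
  refine ⟨fun hxy => ⟨hxy.ne, ?_⟩, ?_⟩
  · rcases h.adj hxy with hg | h' | h'
    · rw [h.gate_eq_self x hx, h.gate_eq_self y hy] at hg
      exact absurd hg hxy.ne
    all_goals simp [h']
  · rintro ⟨hne, ⟨hxP, hyP⟩ | ⟨hxQ, hyQ⟩⟩
    exacts [h.isClique_left hxP hyP hne, h.isClique_right hxQ hyQ hne]

lemma merge_adj_iff (h : TwoCliqueGate G P Q u g) (hv : v ∈ Q) (hvu : v ≠ u) {x y : V}
    (hx : x ∈ P ∪ Q) (hy : y ∈ P ∪ Q) :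
    (mergeCliques G P Q u v).Adj x y ↔ x ≠ y ∧ (x ≠ v ∧ y ≠ v ∨ x = u ∨ y = u) := by
  have hu := h.u_mem_left
  have hu' := h.u_mem_right
  have hvP := h.notMem_left hv hvu
  rw [mergeCliques_adj, h.adj_iff hx hy]
  rcases h.mem_cases v hx with hx' | hx' | hx' | hx' <;>
    rcases h.mem_cases v hy with hy' | hy' | hy' | hy' <;> simp_all

lemma forall_adj (h : TwoCliqueGate G P Q u g) : ∀ y ∈ P ∪ Q, y ≠ u → G.Adj u y := fun y hy hyu =>
  (h.adj_iff (.inl h.u_mem_left) hy).2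
    ⟨Ne.symm hyu, by
      rcases hy with hy | hy
      exacts [.inl ⟨h.u_mem_left, hy⟩, .inr ⟨h.u_mem_right, hy⟩]⟩

lemma merge_forall_adj (h : TwoCliqueGate G P Q u g) (hv : v ∈ Q) (hvu : v ≠ u) :
    ∀ y ∈ P ∪ Q, y ≠ u → (mergeCliques G P Q u v).Adj u y := fun _ hy hyu =>
  (h.merge_adj_iff hv hvu (.inl h.u_mem_left) hy).2 ⟨Ne.symm hyu, .inr (.inl rfl)⟩

lemma merge_isGate (h : TwoCliqueGate G P Q u g) : (mergeCliques G P Q u v).IsGate g where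
  idem := h.isGate.idem
  eq_of_adj a b hab hne := by
    rcases mergeCliques_adj.1 hab with ⟨hab, -⟩ | ⟨-, ⟨⟨ha, -⟩, -⟩ | ⟨-, ha⟩⟩
    · exact h.isGate.eq_of_adj hab hne
    · exact h.gate_eq_self a (.inr ha)
    · exact h.gate_eq_self a (.inl ha)

lemma adj_iff_merge_adj_of_gate_eq (h : TwoCliqueGate G P Q u g) (hv : v ∈ Q) {a b : V}
    (hab : g a = g b) : G.Adj a b ↔ (mergeCliques G P Q u v).Adj a b := by
  have hg : ∀ x ∈ P ∪ Q, ∀ y ∈ P ∪ Q, g x = g y → x = y := fun x hx y hy hxy => by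
    rwa [h.gate_eq_self x hx, h.gate_eq_self y hy] at hxy
  rw [mergeCliques_adj]
  constructor
  · refine fun hadj => .inl ⟨hadj, ?_⟩
    rintro (⟨rfl, hb, hbuv⟩ | ⟨rfl, ha, hauv⟩)
    · exact hbuv (by simp [hg _ (.inr hv) _ (.inr hb) hab])
    · exact hauv (by simp [hg _ (.inr hv) _ (.inr ha) hab.symm])
  · rintro (⟨hadj, -⟩ | ⟨hne, ⟨⟨ha, -⟩, hb⟩ | ⟨⟨hb, -⟩, ha⟩⟩)
    · exact hadj
    · exact absurd (hg _ (.inr ha) _ (.inl hb) hab) hne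
    · exact absurd (hg _ (.inl ha) _ (.inr hb) hab) hne

lemma merge_connected (h : TwoCliqueGate G P Q u g) (hG : G.Connected) (hv : v ∈ Q)
    (hvu : v ≠ u) : (mergeCliques G P Q u v).Connected := by
  refine hG.of_adj_reachable fun a b hab => ?_
  by_cases hM : (mergeCliques G P Q u v).Adj a b
  · exact hM.reachable
  have hvia : ∀ y ∈ Q \ {u, v}, (mergeCliques G P Q u v).Reachable v y := fun y hy =>
    (h.merge_forall_adj hv hvu v (.inr hv) hvu).symm.reachable.trans
      (h.merge_forall_adj hv hvu y (.inr hy.1) (by rintro rfl; simp at hy)).reachable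
  by_cases hD : a = v ∧ b ∈ Q \ {u, v} ∨ b = v ∧ a ∈ Q \ {u, v}
  · rcases hD with ⟨rfl, hb⟩ | ⟨rfl, ha⟩
    exacts [hvia b hb, (hvia a ha).symm]
  · exact absurd (mergeCliques_adj.2 (.inl ⟨hab, hD⟩)) hM

/-- Pairs `(a, b)` with `g b ∈ Q \ {u, v}` get closer when `g a ∈ P \ {u}` and farther when
`g a = v`. -/
noncomputable def weight (P : Set V) (u v : V) : V → ℝ :=
  (P \ {u}).indicator 1 - ({v} : Set V).indicator 1

lemma dist_sub_merge_dist (h : TwoCliqueGate G P Q u g) (hv : v ∈ Q) (hvu : v ≠ u) {x y : V}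
    (hx : x ∈ P ∪ Q) (hy : y ∈ P ∪ Q) :
    (G.dist x y : ℝ) - (mergeCliques G P Q u v).dist x y =
      weight P u v x * (Q \ {u, v}).indicator 1 y +
        weight P u v y * (Q \ {u, v}).indicator 1 x := by
  have hu := h.u_mem_left
  have hu' := h.u_mem_right
  have hvP := h.notMem_left hv hvu
  rw [dist_eq_of_forall_adj h.forall_adj hx hy,
    dist_eq_of_forall_adj (h.merge_forall_adj hv hvu) hx hy, h.adj_iff hx hy,
    h.merge_adj_iff hv hvu hx hy]
  by_cases hxy : x = y
  · subst hxy
    rcases h.mem_cases v hx with hx' | hx' | hx' | hx' <;> simp_all [weight]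
  rcases h.mem_cases v hx with hx' | hx' | hx' | hx' <;>
    rcases h.mem_cases v hy with hy' | hy' | hy' | hy' <;> subst_vars <;>
    simp_all [weight, Ne.symm] <;> norm_num

lemma sum_weight_mul_invGap_pos [Fintype V] (h : TwoCliqueGate G P Q u g) (hG : G.Connected)
    {t s : ℕ} (ht : 0 < t) (hs : 0 < s) (hst : s ≤ t) {w : Fin t → V} {z : Fin s → V}
    (hw : G.IsHangingPath g ht w) (hz : G.IsHangingPath g hs z) (hwP : w ⟨0, ht⟩ ∈ P)
    (hwu : w ⟨0, ht⟩ ≠ u) (hzv : z ⟨0, hs⟩ = v) {a₀ : V} (ha₀ : a₀ ∈ P) (ha₀u : a₀ ≠ u)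
    (ha₀w : a₀ ≠ w ⟨0, ht⟩) (m : ℕ) :
    0 < ∑ a, weight P u v (g a) * invGap (G.dist a (g a) + m) := by
  classical
  set f : V → ℝ := fun a => invGap (G.dist a (g a) + m)
  have hfw : ∀ i, f (w i) = invGap (i + m) := fun i => by simp [f, hw.dist_gate hG h.isGate]
  have hfz : ∀ i, f (z i) = invGap (i + m) := fun i => by simp [f, hz.dist_gate hG h.isGate]
  have hf : ∀ a, 0 ≤ f a := fun a => (invGap_pos _).le
  set W : Finset V := Finset.univ.image fun i : Fin s => w (Fin.castLE hst i)
  have ha₀W : a₀ ∉ W := by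
    simp only [W, Finset.mem_image, Finset.mem_univ, true_and, not_exists]
    intro i hi
    have := (hw.gate_eq_iff a₀).2 ⟨_, hi⟩
    exact ha₀w (h.gate_eq_self a₀ (.inl ha₀) ▸ this)
  have hleft : invGap m + ∑ i : Fin s, invGap (i + m) ≤
      ∑ a, (P \ {u}).indicator 1 (g a) * f a := by
    refine le_trans (le_of_eq ?_) (Finset.sum_le_univ_sum_of_nonneg (s := insert a₀ W)
      fun a => mul_nonneg (Set.indicator_nonneg (fun _ _ => zero_le_one) _) (hf a))
    rw [Finset.sum_insert ha₀W, Finset.sum_image fun i _ j _ hij => by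
      simpa using hw.injective hij]
    have hfa₀ : f a₀ = invGap m := by simp [f, h.gate_eq_self a₀ (.inl ha₀)]
    have hgw : ∀ i, g (w i) = w ⟨0, ht⟩ := fun i => (hw.gate_eq_iff _).2 ⟨i, rfl⟩
    simp [h.gate_eq_self a₀ (.inl ha₀), ha₀, ha₀u, hfa₀, hgw, hwP, hwu, hfw]
  have hright : ∑ a, ({v} : Set V).indicator 1 (g a) * f a = ∑ i : Fin s, invGap (i + m) := by
    rw [← Finset.sum_subset (Finset.subset_univ (Finset.univ.image z)),
      Finset.sum_image fun i _ j _ hij => hz.injective hij]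
    · have hgz : ∀ i, g (z i) = v := fun i => hzv ▸ (hz.gate_eq_iff _).2 ⟨i, rfl⟩
      simp [hgz, hfz]
    · intro a _ ha
      have : g a ≠ v := fun hga => ha (by simpa using (hz.gate_eq_iff a).1 (hzv ▸ hga))
      simp [this]
  have := invGap_pos m
  simp only [weight, Pi.sub_apply, sub_mul, Finset.sum_sub_distrib]
  linarith

theorem hararyIndex_lt_mergeCliques [Fintype V] (h : TwoCliqueGate G P Q u g) (hG : G.Connected)
    (hv : v ∈ Q) (hvu : v ≠ u) {t s : ℕ} (ht : 0 < t) (hs : 0 < s) (hst : s ≤ t)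
    {w : Fin t → V} {z : Fin s → V} (hw : G.IsHangingPath g ht w) (hz : G.IsHangingPath g hs z)
    (hwP : w ⟨0, ht⟩ ∈ P) (hwu : w ⟨0, ht⟩ ≠ u) (hzv : z ⟨0, hs⟩ = v) {a₀ : V} (ha₀ : a₀ ∈ P)
    (ha₀u : a₀ ≠ u) (ha₀w : a₀ ≠ w ⟨0, ht⟩) {y₀ : V} (hy₀ : y₀ ∈ Q \ {u, v}) :
    hararyIndex G < hararyIndex (mergeCliques G P Q u v) := by
  set M := mergeCliques G P Q u v
  have hdiff : ∀ a b, 1 / (M.dist a b : ℝ) - 1 / G.dist a b =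
      (weight P u v (g a) * (Q \ {u, v}).indicator 1 (g b) +
        weight P u v (g b) * (Q \ {u, v}).indicator 1 (g a)) *
        invGap (G.dist a (g a) + G.dist b (g b)) := fun a b => by
    rw [h.isGate.one_div_dist_sub_one_div_dist hG (h.merge_connected hG hv hvu) h.merge_isGate
      (fun _ _ => h.adj_iff_merge_adj_of_gate_eq hv)
      (fun a b => dist_le_two_of_forall_adj h.forall_adj (h.gate_mem a) (h.gate_mem b))
      (fun a b => dist_le_two_of_forall_adj (h.merge_forall_adj hv hvu) (h.gate_mem a)
        (h.gate_mem b)),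
      h.dist_sub_merge_dist hv hvu (h.gate_mem a) (h.gate_mem b)]
  have hpos := sum_sum_mul_pos (fun a => weight P u v (g a))
    (fun a => (Q \ {u, v}).indicator 1 (g a)) (fun a => G.dist a (g a)) invGap
    (fun _ => Set.indicator_nonneg (fun _ _ => zero_le_one) _)
    (b₀ := y₀) (by simp [h.gate_eq_self y₀ (.inr hy₀.1), hy₀])
    (h.sum_weight_mul_invGap_pos hG ht hs hst hw hz hwP hwu hzv ha₀ ha₀u ha₀w)
  simp only [← hdiff, Finset.sum_sub_distrib] at hpos
  unfold hararyIndex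
  linarith

end TwoCliqueGate

end MergeCliques

section HangingGate

variable {V : Type*} {P Q W Z R : Set V} {A : V → Set V} {w₁ v₁ a : V}

/-- `V` is split into the core `P ∪ Q`, the sets `W` and `Z` attached at `w₁` and `v₁`, and the
sets `A x` attached at the vertices `x ∈ R`. -/
structure IsBranchCover (P Q W Z R : Set V) (A : V → Set V) (w₁ v₁ : V) : Prop where
  left_inter : W ∩ (P ∪ Q) = {w₁}
  right_inter : Z ∩ (P ∪ Q) = {v₁}
  left_inter_right : W ∩ Z = ∅
  subset : R ⊆ (P ∪ Q) \ {v₁, w₁}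
  branch_inter : ∀ x ∈ R, A x ∩ (P ∪ Q) = {x}
  branch_inter_paths : ∀ x ∈ R, A x ∩ (W ∪ Z) = ∅
  branch_disjoint : ∀ x ∈ R, ∀ y ∈ R, x ≠ y → A x ∩ A y = ∅
  cover : Set.univ = P ∪ Q ∪ W ∪ Z ∪ ⋃ x ∈ R, A x

open Classical in
noncomputable def hangingGate (w₁ v₁ : V) (W Z R : Set V) (A : V → Set V) (a : V) : V :=
  if a ∈ W then w₁ else if a ∈ Z then v₁ else if h : ∃ x ∈ R, a ∈ A x then h.choose else a

lemma hangingGate_of_mem_left (ha : a ∈ W) : hangingGate w₁ v₁ W Z R A a = w₁ := by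
  simp [hangingGate, ha]

namespace IsBranchCover

lemma left_mem (h : IsBranchCover P Q W Z R A w₁ v₁) : w₁ ∈ W ∧ w₁ ∈ P ∪ Q :=
  (Set.ext_iff.1 h.left_inter w₁).2 rfl

lemma right_mem (h : IsBranchCover P Q W Z R A w₁ v₁) : v₁ ∈ Z ∧ v₁ ∈ P ∪ Q :=
  (Set.ext_iff.1 h.right_inter v₁).2 rfl

lemma mem_cases (h : IsBranchCover P Q W Z R A w₁ v₁) (a : V) :
    a ∈ P ∪ Q ∨ a ∈ W ∨ a ∈ Z ∨ ∃ x ∈ R, a ∈ A x := by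
  have := h.cover ▸ Set.mem_univ a
  simpa [or_assoc] using this

lemma hangingGate_of_mem_right (h : IsBranchCover P Q W Z R A w₁ v₁) (ha : a ∈ Z) :
    hangingGate w₁ v₁ W Z R A a = v₁ := by
  have : a ∉ W := fun haW => by simpa using (Set.ext_iff.1 h.left_inter_right a).1 ⟨haW, ha⟩
  simp [hangingGate, ha, this]

lemma hangingGate_of_mem_branch (h : IsBranchCover P Q W Z R A w₁ v₁) {x : V} (hx : x ∈ R)
    (ha : a ∈ A x) : hangingGate w₁ v₁ W Z R A a = x := by
  have hWZ : a ∉ W ∪ Z := fun haWZ => by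
    simpa using (Set.ext_iff.1 (h.branch_inter_paths x hx) a).1 ⟨ha, haWZ⟩
  have hex : ∃ y ∈ R, a ∈ A y := ⟨x, hx, ha⟩
  simp only [Set.mem_union, not_or] at hWZ
  simp only [hangingGate, hWZ, if_false, dif_pos hex]
  by_contra hne
  have := (Set.ext_iff.1 (h.branch_disjoint _ hex.choose_spec.1 x hx hne) a).1
    ⟨hex.choose_spec.2, ha⟩
  simp at this

lemma hangingGate_of_mem_core (h : IsBranchCover P Q W Z R A w₁ v₁) {x : V} (hx : x ∈ P ∪ Q) :
    hangingGate w₁ v₁ W Z R A x = x := by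
  unfold hangingGate
  split_ifs with hxW hxZ hA
  · exact ((Set.ext_iff.1 h.left_inter x).1 ⟨hxW, hx⟩).symm
  · exact ((Set.ext_iff.1 h.right_inter x).1 ⟨hxZ, hx⟩).symm
  · exact ((Set.ext_iff.1 (h.branch_inter _ hA.choose_spec.1) x).1 ⟨hA.choose_spec.2, hx⟩).symm
  · rfl

lemma hangingGate_eq_left_iff (h : IsBranchCover P Q W Z R A w₁ v₁) :
    hangingGate w₁ v₁ W Z R A a = w₁ ↔ a ∈ W := by
  refine ⟨fun ha => ?_, hangingGate_of_mem_left⟩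
  rcases h.mem_cases a with ha' | ha' | ha' | ⟨x, hx, ha'⟩
  · rw [h.hangingGate_of_mem_core ha'] at ha
    exact ha ▸ h.left_mem.1
  · exact ha'
  · rw [h.hangingGate_of_mem_right ha'] at ha
    simpa using (Set.ext_iff.1 h.left_inter_right w₁).1 ⟨h.left_mem.1, ha ▸ h.right_mem.1⟩
  · rw [h.hangingGate_of_mem_branch hx ha'] at ha
    exact absurd (h.subset (ha ▸ hx)).2 (by simp)

lemma hangingGate_eq_right_iff (h : IsBranchCover P Q W Z R A w₁ v₁) :
    hangingGate w₁ v₁ W Z R A a = v₁ ↔ a ∈ Z := by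
  refine ⟨fun ha => ?_, h.hangingGate_of_mem_right⟩
  rcases h.mem_cases a with ha' | ha' | ha' | ⟨x, hx, ha'⟩
  · rw [h.hangingGate_of_mem_core ha'] at ha
    exact ha ▸ h.right_mem.1
  · rw [hangingGate_of_mem_left ha'] at ha
    simpa using (Set.ext_iff.1 h.left_inter_right v₁).1 ⟨ha ▸ h.left_mem.1, h.right_mem.1⟩
  · exact ha'
  · rw [h.hangingGate_of_mem_branch hx ha'] at ha
    exact absurd (h.subset (ha ▸ hx)).2 (by simp)

lemma twoCliqueGate (h : IsBranchCover P Q W Z R A w₁ v₁) {G : SimpleGraph V} {u : V}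
    (hPQ : P ∩ Q = {u}) (hP : G.IsClique P) (hQ : G.IsClique Q)
    (hedge : ∀ a b, G.Adj a b → a ∈ P ∧ b ∈ P ∨ a ∈ Q ∧ b ∈ Q ∨ a ∈ W ∧ b ∈ W ∨
      a ∈ Z ∧ b ∈ Z ∨ ∃ x ∈ R, a ∈ A x ∧ b ∈ A x) :
    TwoCliqueGate G P Q u (hangingGate w₁ v₁ W Z R A) where
  inter_eq := hPQ
  isClique_left := hP
  isClique_right := hQ
  gate_mem a := by
    rcases h.mem_cases a with ha | ha | ha | ⟨x, hx, ha⟩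
    · rwa [h.hangingGate_of_mem_core ha]
    · rw [hangingGate_of_mem_left ha]; exact h.left_mem.2
    · rw [h.hangingGate_of_mem_right ha]; exact h.right_mem.2
    · rw [h.hangingGate_of_mem_branch hx ha]; exact (h.subset hx).1
  gate_eq_self _ := h.hangingGate_of_mem_core
  adj a b hab := by
    rcases hedge a b hab with hab | hab | ⟨ha, hb⟩ | ⟨ha, hb⟩ | ⟨x, hx, ha, hb⟩
    · exact .inr (.inl hab)
    · exact .inr (.inr hab)
    · rw [hangingGate_of_mem_left ha, hangingGate_of_mem_left hb]; exact .inl rfl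
    · rw [h.hangingGate_of_mem_right ha, h.hangingGate_of_mem_right hb]; exact .inl rfl
    · rw [h.hangingGate_of_mem_branch hx ha, h.hangingGate_of_mem_branch hx hb]; exact .inl rfl

end IsBranchCover

end HangingGate

lemma Set.exists_mem_ne_ne_of_three_le_ncard {V : Type*} {S : Set V} (hS : 3 ≤ S.ncard)
    (x y : V) : ∃ a ∈ S, a ≠ x ∧ a ≠ y := by
  have : ({x, y} : Set V).ncard < S.ncard := by
    have := Set.ncard_insert_le x {y}
    rw [Set.ncard_singleton] at this
    omega
  obtain ⟨a, ha, hxy⟩ := Set.exists_mem_notMem_of_ncard_lt_ncard this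
  exact ⟨a, ha, by simp_all⟩

/-- Lemma 2.4 of the paper.  `G` is connected and is built from two cliques `P` (of size
`p ≥ 3`) and `Q` (of size `q ≥ 3`) sharing exactly the vertex `u`, by attaching a path
`P_t` at `w1 ∈ P \ {u}`, a path `P_s` at `v1 ∈ Q \ {u}` (with `t ≥ s ≥ 1`), and possibly
attaching at each other vertex `x ∈ (P ∪ Q) \ {u, v1, w1}` a connected graph `A x`
meeting the rest of `G` only in `x`.  Deleting the edges of the clique `Q` incident with
`v1` except `v1 u`, and adding all possible edges between `Q \ {v1}` and `P`, strictly
increases the Harary index. -/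
theorem harary_lt_merge_cliques {V : Type*} [Fintype V] (G : SimpleGraph V)
    (hG : G.Connected) (P Q : Set V) (u w1 v1 : V) (p q : ℕ)
    (hp : 3 ≤ p) (hq : 3 ≤ q) (hPcard : P.ncard = p) (hQcard : Q.ncard = q)
    (hPQ : P ∩ Q = {u})
    (hPclique : G.IsClique P) (hQclique : G.IsClique Q)
    (hw1P : w1 ∈ P) (hw1u : w1 ≠ u) (hv1Q : v1 ∈ Q) (hv1u : v1 ≠ u)
    (t s : ℕ) (hs : 1 ≤ s) (hts : s ≤ t)
    (w : Fin t → V) (hwinj : Function.Injective w) (hw0 : w ⟨0, by omega⟩ = w1)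
    (z : Fin s → V) (hzinj : Function.Injective z) (hz0 : z ⟨0, by omega⟩ = v1)
    (hwPQ : Set.range w ∩ (P ∪ Q) = {w1})
    (hzPQ : Set.range z ∩ (P ∪ Q) = {v1})
    (hwz : Set.range w ∩ Set.range z = ∅)
    (hwpath : ∀ i j : Fin t,
      G.Adj (w i) (w j) ↔ ((i : ℕ) + 1 = (j : ℕ) ∨ (j : ℕ) + 1 = (i : ℕ)))
    (hzpath : ∀ i j : Fin s,
      G.Adj (z i) (z j) ↔ ((i : ℕ) + 1 = (j : ℕ) ∨ (j : ℕ) + 1 = (i : ℕ)))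
    (R : Set V) (hR : R = (P ∪ Q) \ {u, v1, w1})
    (A : V → Set V)
    (hAPQ : ∀ x ∈ R, A x ∩ (P ∪ Q) = {x})
    (hApath : ∀ x ∈ R, A x ∩ (Set.range w ∪ Set.range z) = ∅)
    (hAdisj : ∀ x ∈ R, ∀ y ∈ R, x ≠ y → A x ∩ A y = ∅)
    (hcover : Set.univ = P ∪ Q ∪ Set.range w ∪ Set.range z ∪ ⋃ x ∈ R, A x)
    (hedge : ∀ a b, G.Adj a b →
      (a ∈ P ∧ b ∈ P) ∨ (a ∈ Q ∧ b ∈ Q) ∨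
      (∃ i j : Fin t, a = w i ∧ b = w j) ∨
      (∃ i j : Fin s, a = z i ∧ b = z j) ∨
      (∃ x ∈ R, a ∈ A x ∧ b ∈ A x)) :
    hararyIndex G <
      hararyIndex ((G.deleteEdges {e | ∃ y ∈ Q \ {u, v1}, e = s(v1, y)}) ⊔
        SimpleGraph.fromEdgeSet {e | ∃ a ∈ Q \ {v1}, ∃ b ∈ P, e = s(a, b)}) := by
  have ht : 0 < t := by omega
  have hcov : IsBranchCover P Q (Set.range w) (Set.range z) R A w1 v1 :=
    ⟨hwPQ, hzPQ, hwz, hR ▸ Set.sdiff_subset_sdiff_right (Set.subset_insert _ _), hAPQ, hApath,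
      hAdisj, hcover⟩
  have hgate := hcov.twoCliqueGate hPQ hPclique hQclique fun a b hab => by
    simpa [Set.mem_range, eq_comm, exists_and_left, exists_and_right] using hedge a b hab
  have hw : G.IsHangingPath (hangingGate w1 v1 _ _ R A) ht w :=
    ⟨hwinj, hwpath, fun _ => by rw [hw0]; exact hcov.hangingGate_eq_left_iff⟩
  have hz : G.IsHangingPath (hangingGate w1 v1 _ _ R A) (by omega) z :=
    ⟨hzinj, hzpath, fun _ => by rw [hz0]; exact hcov.hangingGate_eq_right_iff⟩
  obtain ⟨a₀, ha₀, ha₀u, ha₀w⟩ := Set.exists_mem_ne_ne_of_three_le_ncard (hPcard ▸ hp) u w1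
  obtain ⟨y₀, hy₀, hy₀u, hy₀v⟩ := Set.exists_mem_ne_ne_of_three_le_ncard (hQcard ▸ hq) u v1
  exact hgate.hararyIndex_lt_mergeCliques hG hv1Q hv1u ht (by omega) hts hw hz (hw0 ▸ hw1P)
    (hw0 ▸ hw1u) hz0 ha₀ ha₀u (hw0 ▸ ha₀w) (show y₀ ∈ Q \ {u, v1} by simp [hy₀, hy₀u, hy₀v])
end

section
/- Let G be a finite simple graph of order n ≥ 3 that contains a cut vertex or a cut edge. Then H(G) ≤ H(G_{n,1}), with equality if and only if G is isomorphic to G_{n,1}, where G_{n,1} is the graph obtained from the complete graph K_{n−1} by attaching one pendant vertex. -/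
/-!
Each pair of distinct vertices contributes at most `1` to the Harary index, and at most `1/2`
if it is not adjacent, so `H(G) ≤ C(n,2) - m/2` where `m` counts the non-adjacent pairs;
equality holds when all non-adjacent pairs are at distance `2`.

A cut vertex, and (for `n ≥ 3`) one of the endpoints of a cut edge, is a vertex `v` such that the
other vertices split into nonempty parts `A`, `B` with no edge between them. All pairs in
`A × B` are then non-adjacent, so `m ≥ |A| |B| ≥ |A| + |B| - 1 = n - 2`. If `m = n - 2`, one part
is a single vertex `a` and every non-adjacent pair contains `a`: `G` is `K_{n-1}` with the pendant
vertex `a` attached at `v`, that is `G ≅ G_{n,1}`, whose non-adjacent pairs are all at distance `2`.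
-/

open SimpleGraph

/-- The clique vertex "owning" vertex `j` of `GNK n k`: the first `n - k` vertices form
the clique `K_{n-k}`, and the remaining `k` vertices are distributed round-robin among
the clique vertices, forming pendant paths of almost equal lengths. -/
def gnkOwner (n k j : ℕ) : ℕ := if j < n - k then j else (j - (n - k)) % (n - k)

/-- The distance of vertex `j` of `GNK n k` from its owning clique vertex along the
attached pendant path. -/
def gnkDepth (n k j : ℕ) : ℕ := if j < n - k then 0 else (j - (n - k)) / (n - k) + 1

/-- The graph `G_{n,k}` on `n` vertices: obtained from `K_{n-k}` by attaching pendant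
paths of almost equal lengths (`k` new vertices in total, distributed round-robin) at
its `n - k` vertices. -/
def GNK (n k : ℕ) : SimpleGraph (Fin n) :=
  SimpleGraph.fromRel (fun a b =>
    (gnkDepth n k a = 0 ∧ gnkDepth n k b = 0) ∨
    (gnkOwner n k a = gnkOwner n k b ∧ gnkDepth n k a + 1 = gnkDepth n k b))

/-- A vertex is a cut vertex if deleting it increases the number of connected
components. -/
def IsCutVertex {V : Type*} [Fintype V] (G : SimpleGraph V) (v : V) : Prop :=
  Nat.card G.ConnectedComponent <
    Nat.card (G.induce ({v}ᶜ : Set V)).ConnectedComponent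

/-- An edge is a cut edge if deleting it increases the number of connected
components. -/
def IsCutEdge {V : Type*} [Fintype V] (G : SimpleGraph V) (e : Sym2 V) : Prop :=
  e ∈ G.edgeSet ∧
    Nat.card G.ConnectedComponent < Nat.card (G.deleteEdges {e}).ConnectedComponent

open Finset

namespace SimpleGraph

variable {V W : Type*} {G : SimpleGraph V} {G' : SimpleGraph W}

theorem Reachable.dist_map_le {u v : V} (h : G.Reachable u v) (f : G →g G') :
    G'.dist (f u) (f v) ≤ G.dist u v := by
  obtain ⟨p, hp⟩ := h.exists_walk_length_eq_dist
  exact hp ▸ (dist_le (p.map f)).trans_eq (Walk.length_map f p)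

theorem Iso.dist_eq (φ : G ≃g G') (u v : V) : G'.dist (φ u) (φ v) = G.dist u v := by
  by_cases h : G.Reachable u v
  · refine le_antisymm (h.dist_map_le φ.toHom) ?_
    simpa using ((Iso.reachable_iff (φ := φ)).mpr h).dist_map_le φ.symm.toHom
  · rw [dist_eq_zero_of_not_reachable h,
      dist_eq_zero_of_not_reachable (Iso.reachable_iff.not.mpr h)]

theorem Iso.hararyIndex_eq [Fintype V] [Fintype W] (φ : G ≃g G') :
    hararyIndex G = hararyIndex G' := by
  unfold hararyIndex
  congr 1
  refine Fintype.sum_equiv φ.toEquiv _ _ fun u => Fintype.sum_equiv φ.toEquiv _ _ fun v => ?_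
  simp [φ.dist_eq]

theorem dist_eq_two_of_adj_of_adj {u v w : V} (hne : u ≠ w) (hn : ¬ G.Adj u w)
    (huv : G.Adj u v) (hvw : G.Adj v w) : G.dist u w = 2 := by
  have hr : G.Reachable u w := huv.reachable.trans hvw.reachable
  have := dist_le (.cons huv (.cons hvw .nil))
  have := hr.one_lt_dist_of_ne_of_not_adj hne hn
  simp only [Walk.length_cons, Walk.length_nil] at *
  omega

section Harary

theorem sum_sum_ite_adj [Fintype V] [DecidableRel G.Adj] :
    ∑ u, ∑ v, (if G.Adj u v then (1 : ℝ) else 0) = 2 * #G.edgeFinset := by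
  simp only [sum_boole, ← neighborFinset_eq_filter, card_neighborFinset_eq_degree]
  exact_mod_cast G.sum_degrees_eq_twice_card_edges

variable [DecidableEq V] [DecidableRel G.Adj]

/-- The bound is written so that its double sum counts the edges of `⊤` and of `Gᶜ`. -/
theorem one_div_dist_le (u v : V) :
    1 / (G.dist u v : ℝ) ≤
      (if (⊤ : SimpleGraph V).Adj u v then 1 else 0) - (if Gᶜ.Adj u v then 1 else 0) / 2 := by
  by_cases huv : u = v
  · simp [huv]
  by_cases hadj : G.Adj u v
  · simp [huv, hadj, dist_eq_one_iff_adj.mpr hadj]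
  have : G.dist u v ≠ 1 := fun h => hadj (dist_eq_one_iff_adj.mp h)
  simp only [top_adj, ne_eq, huv, not_false_eq_true, ↓reduceIte, compl_adj, hadj, and_self]
  rcases Nat.eq_zero_or_pos (G.dist u v) with h0 | hpos
  · norm_num [h0]
  · rw [div_le_iff₀ (by positivity)]
    have : (2 : ℝ) ≤ G.dist u v := by exact_mod_cast (by omega : 2 ≤ G.dist u v)
    linarith

theorem one_div_dist_eq {u v : V} (h : Gᶜ.Adj u v → G.dist u v = 2) :
    1 / (G.dist u v : ℝ) =
      (if (⊤ : SimpleGraph V).Adj u v then 1 else 0) - (if Gᶜ.Adj u v then 1 else 0) / 2 := by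
  by_cases huv : u = v
  · simp [huv]
  by_cases hadj : G.Adj u v
  · simp [huv, hadj, dist_eq_one_iff_adj.mpr hadj]
  have hc : Gᶜ.Adj u v := (compl_adj G u v).mpr ⟨huv, hadj⟩
  rw [h hc]
  norm_num [huv, hc]

variable [Fintype V]

theorem sum_sum_ite_top_adj_sub_ite_compl_adj :
    ∑ u, ∑ v, ((if (⊤ : SimpleGraph V).Adj u v then (1 : ℝ) else 0) -
      (if Gᶜ.Adj u v then 1 else 0) / 2) =
      2 * ((Fintype.card V).choose 2 - #Gᶜ.edgeFinset / 2 : ℝ) := by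
  simp only [sum_sub_distrib, ← sum_div, sum_sum_ite_adj, card_edgeFinset_top_eq_card_choose_two]
  ring

theorem hararyIndex_le : hararyIndex G ≤ (Fintype.card V).choose 2 - #Gᶜ.edgeFinset / 2 := by
  have := sum_le_sum fun u (_ : u ∈ univ) =>
    sum_le_sum fun v (_ : v ∈ univ) => G.one_div_dist_le u v
  rw [sum_sum_ite_top_adj_sub_ite_compl_adj] at this
  rw [hararyIndex]
  linarith

theorem hararyIndex_eq_of_forall_dist_eq_two (h : ∀ u v, Gᶜ.Adj u v → G.dist u v = 2) :
    hararyIndex G = (Fintype.card V).choose 2 - #Gᶜ.edgeFinset / 2 := by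
  rw [hararyIndex, sum_congr rfl fun u _ => sum_congr rfl fun v _ => one_div_dist_eq (h u v),
    sum_sum_ite_top_adj_sub_ite_compl_adj]
  ring

end Harary

/-- `K_{n-1}` on the vertices other than `a`, with the pendant vertex `a` attached at `v`. -/
def IsPendantClique (G : SimpleGraph V) (a v : V) : Prop :=
  a ≠ v ∧ ∀ x y, G.Adj x y ↔ x ≠ y ∧ (x = a → y = v) ∧ (y = a → x = v)

namespace IsPendantClique

variable {a v : V} {a' v' : W}

theorem compl_adj_iff (h : G.IsPendantClique a v) {x y : V} :
    Gᶜ.Adj x y ↔ (x = a ∧ y ≠ a ∧ y ≠ v) ∨ (y = a ∧ x ≠ a ∧ x ≠ v) := by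
  rw [compl_adj, h.2]
  grind

theorem dist_eq_two (h : G.IsPendantClique a v) {x y : V} (hxy : Gᶜ.Adj x y) :
    G.dist x y = 2 := by
  have hav : G.Adj a v := (h.2 a v).mpr ⟨h.1, fun _ => rfl, fun e => absurd e.symm h.1⟩
  have hva (w : V) (hwa : w ≠ a) (hwv : w ≠ v) : G.Adj v w :=
    (h.2 v w).mpr ⟨fun e => hwv e.symm, fun e => absurd e.symm h.1, fun e => absurd e hwa⟩
  rcases h.compl_adj_iff.mp hxy with ⟨rfl, hya, hyv⟩ | ⟨rfl, hxa, hxv⟩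
  · exact dist_eq_two_of_adj_of_adj hxy.ne hxy.2 hav (hva y hya hyv)
  · rw [dist_comm]
    exact dist_eq_two_of_adj_of_adj hxy.ne.symm (fun e => hxy.2 e.symm) hav (hva x hxa hxv)

theorem compl_edgeFinset_eq [Fintype V] [DecidableEq V] [DecidableRel G.Adj]
    (h : G.IsPendantClique a v) : Gᶜ.edgeFinset = ({a, v}ᶜ : Finset V).image (s(a, ·)) := by
  ext e
  induction e using Sym2.ind with
  | _ x y =>
    simp only [mem_edgeFinset, mem_edgeSet, h.compl_adj_iff, mem_image, mem_compl, mem_insert,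
      mem_singleton, not_or]
    constructor
    · rintro (⟨rfl, hy⟩ | ⟨rfl, hx⟩)
      exacts [⟨y, hy, rfl⟩, ⟨x, hx, Sym2.eq_swap⟩]
    · rintro ⟨z, ⟨hza, hzv⟩, hz⟩
      rcases Sym2.eq_iff.mp hz with ⟨rfl, rfl⟩ | ⟨rfl, rfl⟩
      exacts [Or.inl ⟨rfl, hza, hzv⟩, Or.inr ⟨rfl, hza, hzv⟩]

theorem card_compl_edgeFinset [Fintype V] [DecidableEq V] [DecidableRel G.Adj]
    (h : G.IsPendantClique a v) : #Gᶜ.edgeFinset = Fintype.card V - 2 := by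
  rw [h.compl_edgeFinset_eq, card_image_of_injective _ fun _ _ => Sym2.congr_right.mp,
    card_compl, card_pair h.1]

theorem hararyIndex_eq [Fintype V] (h : G.IsPendantClique a v) :
    hararyIndex G = (Fintype.card V).choose 2 - ((Fintype.card V - 2 : ℕ) : ℝ) / 2 := by
  classical
  rw [hararyIndex_eq_of_forall_dist_eq_two fun _ _ => h.dist_eq_two, h.card_compl_edgeFinset]

def iso (hG : G.IsPendantClique a v) (hG' : G'.IsPendantClique a' v') (e : V ≃ W)
    (ha : e a = a') (hv : e v = v') : G ≃g G' where
  toEquiv := e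
  map_rel_iff' {x y} := by
    rw [hG.2, hG'.2, ← ha, ← hv]
    simp only [ne_eq, e.apply_eq_iff_eq]

theorem nonempty_iso [Fintype V] [Fintype W] (hG : G.IsPendantClique a v)
    (hG' : G'.IsPendantClique a' v') (hc : Fintype.card V = Fintype.card W) :
    Nonempty (G ≃g G') := by
  classical
  obtain ⟨e₀⟩ := Fintype.card_eq.mp hc
  let e₁ := e₀.trans (Equiv.swap (e₀ a) a')
  let e₂ := e₁.trans (Equiv.swap (e₁ v) v')
  have he₁ : e₁ a = a' := by simp [e₁]
  have hne : a' ≠ e₁ v := he₁ ▸ e₁.injective.ne hG.1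
  exact ⟨hG.iso hG' e₂ (by simp [e₂, he₁, Equiv.swap_apply_of_ne_of_ne hne hG'.1]) (by simp [e₂])⟩

end IsPendantClique

theorem card_image_mk_product [DecidableEq V] {A B : Finset V} (h : Disjoint A B) :
    #((A ×ˢ B).image (fun p : V × V => s(p.1, p.2))) = #A * #B := by
  rw [card_image_of_injOn, card_product]
  rintro ⟨a, b⟩ hab ⟨a', b'⟩ hab' e
  simp only [coe_product, Set.mem_prod, mem_coe] at hab hab'
  rcases Sym2.eq_iff.mp e with ⟨rfl, rfl⟩ | ⟨rfl, rfl⟩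
  · rfl
  · exact (Finset.disjoint_left.mp h hab.1 hab'.2).elim

structure IsVertexSeparation [Fintype V] [DecidableEq V] (G : SimpleGraph V) (v : V)
    (A B : Finset V) : Prop where
  nonempty_left : A.Nonempty
  nonempty_right : B.Nonempty
  disjoint : Disjoint A B
  union_eq : A ∪ B = univ.erase v
  not_adj : ∀ a ∈ A, ∀ b ∈ B, ¬ G.Adj a b

namespace IsVertexSeparation

variable [Fintype V] [DecidableEq V] {v : V} {A B : Finset V}

theorem symm (h : G.IsVertexSeparation v A B) : G.IsVertexSeparation v B A :=
  ⟨h.nonempty_right, h.nonempty_left, h.disjoint.symm, union_comm A B ▸ h.union_eq,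
    fun b hb a ha hba => h.not_adj a ha b hb hba.symm⟩

theorem card_add_card (h : G.IsVertexSeparation v A B) : #A + #B = Fintype.card V - 1 := by
  rw [← card_union_of_disjoint h.disjoint, h.union_eq, card_erase_of_mem (mem_univ v), card_univ]

theorem mem_or_mem (h : G.IsVertexSeparation v A B) {x : V} (hx : x ≠ v) : x ∈ A ∨ x ∈ B :=
  mem_union.mp (h.union_eq ▸ mem_erase.mpr ⟨hx, mem_univ x⟩)

theorem ne_of_mem_left (h : G.IsVertexSeparation v A B) {x : V} (hx : x ∈ A) : x ≠ v :=
  ne_of_mem_erase (h.union_eq ▸ mem_union_left B hx)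

theorem ne_of_mem_right (h : G.IsVertexSeparation v A B) {x : V} (hx : x ∈ B) : x ≠ v :=
  h.symm.ne_of_mem_left hx

variable [DecidableRel G.Adj]

theorem image_mk_subset (h : G.IsVertexSeparation v A B) :
    (A ×ˢ B).image (fun p : V × V => s(p.1, p.2)) ⊆ Gᶜ.edgeFinset := by
  simp only [image_subset_iff, mem_product, mem_edgeFinset, mem_edgeSet, compl_adj, Prod.forall]
  rintro a b ⟨ha, hb⟩
  exact ⟨fun e => Finset.disjoint_left.mp h.disjoint ha (e ▸ hb), h.not_adj a ha b hb⟩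

theorem card_mul_card_le (h : G.IsVertexSeparation v A B) : #A * #B ≤ #Gᶜ.edgeFinset :=
  card_image_mk_product h.disjoint ▸ card_le_card h.image_mk_subset

theorem card_sub_two_le (h : G.IsVertexSeparation v A B) :
    Fintype.card V - 2 ≤ #Gᶜ.edgeFinset := by
  have hA := h.nonempty_left.card_pos
  have hB := h.nonempty_right.card_pos
  have := h.card_add_card
  have := h.card_mul_card_le
  have : #A + #B ≤ #A * #B + 1 := by nlinarith
  omega

theorem compl_adj_mem (h : G.IsVertexSeparation v A B) (hc : #Gᶜ.edgeFinset ≤ #A * #B)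
    {x y : V} (hxy : Gᶜ.Adj x y) : (x ∈ A ∧ y ∈ B) ∨ (x ∈ B ∧ y ∈ A) := by
  have heq := eq_of_subset_of_card_le h.image_mk_subset (card_image_mk_product h.disjoint ▸ hc)
  have : s(x, y) ∈ (A ×ˢ B).image (fun p : V × V => s(p.1, p.2)) := heq ▸ mem_edgeFinset.mpr hxy
  obtain ⟨⟨a, b⟩, hab, e⟩ := mem_image.mp this
  rw [mem_product] at hab
  rcases Sym2.eq_iff.mp e with ⟨rfl, rfl⟩ | ⟨rfl, rfl⟩
  exacts [Or.inl hab, Or.inr hab.symm]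

theorem isPendantClique_of_left_eq {a : V} (h : G.IsVertexSeparation v {a} B)
    (hc : #Gᶜ.edgeFinset ≤ #B) : G.IsPendantClique a v := by
  have hB {y : V} (hya : y ≠ a) (hyv : y ≠ v) : y ∈ B :=
    (h.mem_or_mem hyv).resolve_left (by simpa using hya)
  refine ⟨h.ne_of_mem_left (mem_singleton_self a), fun x y => ⟨fun hxy => ?_, fun hxy => ?_⟩⟩
  · refine ⟨hxy.ne, fun hx => ?_, fun hy => ?_⟩
    · subst hx
      by_contra hyv
      exact h.not_adj x (mem_singleton_self x) y (hB hxy.ne.symm hyv) hxy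
    · subst hy
      by_contra hxv
      exact h.not_adj y (mem_singleton_self y) x (hB hxy.ne hxv) hxy.symm
  · obtain ⟨hne, hxa, hya⟩ := hxy
    by_contra hn
    rcases h.compl_adj_mem (by simpa using hc) ⟨hne, hn⟩ with ⟨hx, hy⟩ | ⟨hx, hy⟩
    · exact h.ne_of_mem_right hy (hxa (mem_singleton.mp hx))
    · exact h.ne_of_mem_right hx (hya (mem_singleton.mp hy))

theorem exists_isPendantClique (h : G.IsVertexSeparation v A B)
    (hc : #Gᶜ.edgeFinset ≤ Fintype.card V - 2) : ∃ a, G.IsPendantClique a v := by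
  have hA := h.nonempty_left.card_pos
  have hB := h.nonempty_right.card_pos
  have := h.card_add_card
  have := h.card_mul_card_le
  have hAB : #A = 1 ∨ #B = 1 := by
    by_contra! hne
    have : #A + #B ≤ #A * #B := by nlinarith [(by omega : 2 ≤ #A), (by omega : 2 ≤ #B)]
    omega
  rcases hAB with hA1 | hB1
  · obtain ⟨a, rfl⟩ := card_eq_one.mp hA1
    exact ⟨a, h.isPendantClique_of_left_eq (by omega)⟩
  · obtain ⟨b, rfl⟩ := card_eq_one.mp hB1
    exact ⟨b, h.symm.isPendantClique_of_left_eq (by omega)⟩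

end IsVertexSeparation

theorem exists_isVertexSeparation [Fintype V] [DecidableEq V] {v : V}
    (h : ¬ (G.induce ({v}ᶜ : Set V)).Preconnected) : ∃ A B, G.IsVertexSeparation v A B := by
  classical
  obtain ⟨x, y, hxy⟩ : ∃ x y, ¬ (G.induce ({v}ᶜ : Set V)).Reachable x y := by
    simpa [Preconnected] using h
  let P (z : V) : Prop := ∃ hz : z ≠ v, (G.induce ({v}ᶜ : Set V)).Reachable x ⟨z, hz⟩
  refine ⟨(univ.erase v).filter P, (univ.erase v).filter (¬ P ·), ⟨⟨x, ?_⟩, ⟨y, ?_⟩,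
    disjoint_filter_filter_not _ _ _, filter_union_filter_not_eq _ _, ?_⟩⟩
  · exact mem_filter.mpr ⟨mem_erase.mpr ⟨x.2, mem_univ _⟩, x.2, Reachable.refl _⟩
  · simp only [mem_filter, mem_erase, mem_univ, P]
    exact ⟨⟨y.2, trivial⟩, fun ⟨_, hr⟩ => hxy hr⟩
  · simp only [mem_filter, mem_erase, mem_univ, P]
    rintro a ⟨-, ha, hra⟩ b ⟨⟨hb, -⟩, hnb⟩ hab
    exact hnb ⟨hb, hra.trans (Adj.reachable (G := G.induce ({v}ᶜ : Set V)) hab)⟩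

theorem IsCutVertex.not_preconnected_induce [Fintype V] {v : V} (h : IsCutVertex G v) :
    ¬ (G.induce ({v}ᶜ : Set V)).Preconnected := fun hc => by
  have : Nonempty G.ConnectedComponent := ⟨G.connectedComponentMk v⟩
  have := Finite.card_le_one_iff_subsingleton.mpr hc.subsingleton_connectedComponent
  have := Nat.card_pos (α := G.ConnectedComponent)
  unfold IsCutVertex at h
  omega

theorem reachable_deleteEdges_of_reachable {u v x y : V}
    (huv : (G.deleteEdges {s(u, v)}).Reachable u v) (h : G.Reachable x y) :
    (G.deleteEdges {s(u, v)}).Reachable x y := by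
  obtain ⟨p⟩ := h
  induction p with
  | nil => rfl
  | @cons a b _ hab _ ih =>
    refine Reachable.trans ?_ ih
    by_cases he : s(a, b) = s(u, v)
    · rcases Sym2.eq_iff.mp he with ⟨rfl, rfl⟩ | ⟨rfl, rfl⟩
      exacts [huv, huv.symm]
    · exact Adj.reachable ((deleteEdges_adj ..).mpr ⟨hab, he⟩)

theorem IsCutEdge.isBridge [Fintype V] {e : Sym2 V} (h : IsCutEdge G e) : G.IsBridge e := by
  induction e using Sym2.ind with
  | _ u v =>
  rw [isBridge_iff]
  intro huv
  have hinj : Function.Injective (ConnectedComponent.map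
      (Hom.ofLE (deleteEdges_le {s(u, v)}) : G.deleteEdges {s(u, v)} →g G)) := by
    refine ConnectedComponent.ind₂ fun x y hxy => ?_
    simp only [ConnectedComponent.map_mk, ConnectedComponent.eq] at hxy ⊢
    exact reachable_deleteEdges_of_reachable huv hxy
  exact (Nat.card_le_card_of_injective _ hinj).not_gt h.2

theorem reachable_deleteEdges_of_reachable_induce {u v : V} {x y : ({v}ᶜ : Set V)}
    (h : (G.induce ({v}ᶜ : Set V)).Reachable x y) : (G.deleteEdges {s(u, v)}).Reachable x y := by
  let f : G.induce ({v}ᶜ : Set V) →g G.deleteEdges {s(u, v)} :=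
    ⟨Subtype.val, fun {a b} hab => (deleteEdges_adj ..).mpr ⟨hab, fun he => by
      rcases Sym2.eq_iff.mp (Set.mem_singleton_iff.mp he) with ⟨-, hb⟩ | ⟨ha, -⟩
      exacts [b.2 hb, a.2 ha]⟩⟩
  exact h.map f

theorem IsCutEdge.exists_not_preconnected_induce [Fintype V] {e : Sym2 V} (h : IsCutEdge G e)
    (hn : 3 ≤ Fintype.card V) : ∃ v, ¬ (G.induce ({v}ᶜ : Set V)).Preconnected := by
  classical
  induction e using Sym2.ind with
  | _ u v =>
  have hb := isBridge_iff.mp h.isBridge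
  have huv : u ≠ v := G.ne_of_adj h.1
  obtain ⟨w, -, hw⟩ := exists_mem_notMem_of_card_lt_card (s := ({u, v} : Finset V)) (t := univ)
    (by rw [card_univ]; exact card_le_two.trans_lt hn)
  simp only [mem_insert, mem_singleton, not_or] at hw
  by_cases hu : (G.deleteEdges {s(u, v)}).Reachable u w
  · refine ⟨u, fun hc => hb (hu.trans ?_)⟩
    have := reachable_deleteEdges_of_reachable_induce (u := v) (hc ⟨v, huv.symm⟩ ⟨w, hw.1⟩)
    rw [Sym2.eq_swap] at this
    exact this.symm
  · exact ⟨v, fun hc => hu (reachable_deleteEdges_of_reachable_induce (hc ⟨u, huv⟩ ⟨w, hw.2⟩))⟩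

end SimpleGraph

theorem gnkDepth_one {n j : ℕ} (hj : j < n) : gnkDepth n 1 j = if j < n - 1 then 0 else 1 := by
  unfold gnkDepth
  split_ifs with h
  · rfl
  · rw [show j - (n - 1) = 0 by omega, Nat.zero_div]

theorem gnkOwner_one {n j : ℕ} (hj : j < n) : gnkOwner n 1 j = if j < n - 1 then j else 0 := by
  unfold gnkOwner
  split_ifs with h
  · rfl
  · rw [show j - (n - 1) = 0 by omega, Nat.zero_mod]

theorem isPendantClique_GNK {n : ℕ} (hn : 2 ≤ n) :
    (GNK n 1).IsPendantClique ⟨n - 1, by omega⟩ ⟨0, by omega⟩ := by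
  refine ⟨by simp [Fin.ext_iff]; omega, fun x y => ?_⟩
  rw [GNK, fromRel_adj, gnkDepth_one x.2, gnkDepth_one y.2, gnkOwner_one x.2, gnkOwner_one y.2]
  simp only [ne_eq, Fin.ext_iff]
  have := x.2
  have := y.2
  split_ifs <;> simp <;> omega

/-- If a graph of order `n ≥ 3` contains a cut vertex or a cut edge, then its Harary
index is at most that of `G_{n,1}` (the complete graph `K_{n-1}` with one pendant
vertex attached), with equality iff the graph is isomorphic to `G_{n,1}`. -/
theorem harary_le_GNK1 (n : ℕ) (hn : 3 ≤ n) {V : Type*} [Fintype V] (G : SimpleGraph V)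
    (hcard : Fintype.card V = n)
    (h : (∃ v, IsCutVertex G v) ∨ (∃ e, IsCutEdge G e)) :
    hararyIndex G ≤ hararyIndex (GNK n 1) ∧
      (hararyIndex G = hararyIndex (GNK n 1) ↔ Nonempty (G ≃g GNK n 1)) := by
  classical
  subst hcard
  obtain ⟨v, hv⟩ : ∃ v, ¬ (G.induce ({v}ᶜ : Set V)).Preconnected := by
    rcases h with ⟨v, hv⟩ | ⟨e, he⟩
    exacts [⟨v, hv.not_preconnected_induce⟩, he.exists_not_preconnected_induce hn]
  obtain ⟨A, B, hsep⟩ := exists_isVertexSeparation hv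
  have hK := isPendantClique_GNK (n := Fintype.card V) (by omega)
  have hH : hararyIndex (GNK (Fintype.card V) 1) =
      (Fintype.card V).choose 2 - ((Fintype.card V - 2 : ℕ) : ℝ) / 2 := by
    simpa using hK.hararyIndex_eq
  have hle := G.hararyIndex_le
  refine ⟨hH ▸ hle.trans (by gcongr; exact hsep.card_sub_two_le), fun heq => ?_, fun ⟨φ⟩ => ?_⟩
  · have hc : #Gᶜ.edgeFinset ≤ Fintype.card V - 2 := by
      rw [heq, hH] at hle
      exact_mod_cast (by linarith : (#Gᶜ.edgeFinset : ℝ) ≤ (Fintype.card V - 2 : ℕ))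
    obtain ⟨a, ha⟩ := hsep.exists_isPendantClique hc
    exact ha.nonempty_iso hK (Fintype.card_fin _).symm
  · exact φ.hararyIndex_eq
end

section
/- Let n_1 ≥ n_2 ≥ 2 and n_3 ≥ 1 be integers. Then H(G_{n_1,n_2,n_3}) < H(G_{n_1+1,n_2−1,n_3}). -/
open SimpleGraph

/-- Which of the three parts a vertex of `Fin a ⊕ Fin b ⊕ Fin c` lies in. -/
def triPart {a b c : ℕ} : Fin a ⊕ Fin b ⊕ Fin c → ℕ :=
  Sum.elim (fun _ => 0) (Sum.elim (fun _ => 1) (fun _ => 2))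

/-- The graph `G_{a,b,c} = (K_a ∪ K_b) ∨ K_c`: the join of the disjoint union of the
complete graphs `K_a` and `K_b` with the complete graph `K_c`. -/
def GJoin (a b c : ℕ) : SimpleGraph (Fin a ⊕ Fin b ⊕ Fin c) :=
  SimpleGraph.fromRel (fun x y =>
    triPart x = triPart y ∨ triPart x = 2 ∨ triPart y = 2)

/-!
When `c ≥ 1`, two distinct vertices of `G_{a,b,c}` are adjacent unless one lies in `K_a` and the
other in `K_b`, and then they are at distance `2` through any vertex of `K_c`. Hence
`2 H(G_{a,b,c}) = N (N - 1) - a b` with `N = a + b + c`. Moving a vertex from `K_{n₂}` to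
`K_{n₁}` keeps `N` and lowers the product, as `(n₁ + 1)(n₂ - 1) = n₁ n₂ - (n₁ - n₂ + 1)`.
-/

lemma SimpleGraph.dist_eq_two_of_mem_commonNeighbors {V : Type*} {G : SimpleGraph V}
    {u v w : V} (hne : u ≠ v) (hnadj : ¬G.Adj u v) (hw : w ∈ G.commonNeighbors u v) :
    G.dist u v = 2 := by
  rw [dist, edist_eq_two_iff.mpr ⟨hne, hnadj, w, hw⟩]
  rfl

namespace GJoin

variable {a b c : ℕ}

lemma adj_iff {x y : Fin a ⊕ Fin b ⊕ Fin c} :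
    (GJoin a b c).Adj x y ↔ x ≠ y ∧ triPart x + triPart y ≠ 1 := by
  rcases x with x | x | x <;> rcases y with y | y | y <;> simp [GJoin, triPart, eq_comm]

lemma dist_eq (hc : 1 ≤ c) (x y : Fin a ⊕ Fin b ⊕ Fin c) :
    (GJoin a b c).dist x y = if x = y then 0 else if triPart x + triPart y = 1 then 2 else 1 := by
  split_ifs with hxy hcross
  · rw [hxy, dist_self]
  · let z : Fin a ⊕ Fin b ⊕ Fin c := .inr (.inr ⟨0, hc⟩)
    refine dist_eq_two_of_mem_commonNeighbors hxy (by simp [adj_iff, hcross]) (w := z) ?_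
    have hx : triPart x ≠ triPart z := by change triPart x ≠ 2; omega
    have hy : triPart y ≠ triPart z := by change triPart y ≠ 2; omega
    exact ⟨adj_iff.mpr ⟨ne_of_apply_ne _ hx, by omega⟩, adj_iff.mpr ⟨ne_of_apply_ne _ hy, by omega⟩⟩
  · exact dist_eq_one_iff_adj.mpr (adj_iff.mpr ⟨hxy, hcross⟩)

lemma one_div_dist (hc : 1 ≤ c) (x y : Fin a ⊕ Fin b ⊕ Fin c) :
    1 / ((GJoin a b c).dist x y : ℝ) =
      1 - (if x = y then 1 else 0) - (if triPart x + triPart y = 1 then 1 / 2 else 0) := by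
  rcases eq_or_ne x y with rfl | hxy
  · have : triPart x + triPart x ≠ 1 := by omega
    simp [this]
  · by_cases hcross : triPart x + triPart y = 1 <;> simp [dist_eq hc, hxy, hcross]
    norm_num

theorem hararyIndex_eq (hc : 1 ≤ c) :
    hararyIndex (GJoin a b c) =
      (((a + b + c : ℕ) : ℝ) * ((a + b + c : ℕ) - 1) - (a * b : ℕ)) / 2 := by
  have hcross : ∑ x : Fin a ⊕ Fin b ⊕ Fin c, ∑ y : Fin a ⊕ Fin b ⊕ Fin c,
      (if triPart x + triPart y = 1 then 1 / 2 else 0 : ℝ) = (a * b : ℕ) := by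
    simp only [Fintype.sum_sum_type, triPart, Sum.elim_inl, Sum.elim_inr, Nat.reduceAdd,
      Nat.reduceEqDiff, reduceIte, Finset.sum_const, Finset.card_univ,
      Fintype.card_fin, nsmul_eq_mul, Nat.cast_mul]
    ring
  simp only [hararyIndex, one_div_dist hc, Finset.sum_sub_distrib, hcross, Finset.sum_ite_eq,
    Finset.mem_univ, reduceIte, Finset.sum_const, Finset.card_univ, Fintype.card_sum,
    Fintype.card_fin, nsmul_eq_mul, mul_one]
  push_cast
  ring

end GJoin

/-- For `n₁ ≥ n₂ ≥ 2` and `n₃ ≥ 1`,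
`H(G_{n₁,n₂,n₃}) < H(G_{n₁+1,n₂-1,n₃})`. -/
theorem harary_GJoin_lt (n₁ n₂ n₃ : ℕ) (h2 : 2 ≤ n₂) (h12 : n₂ ≤ n₁) (h3 : 1 ≤ n₃) :
    hararyIndex (GJoin n₁ n₂ n₃) < hararyIndex (GJoin (n₁ + 1) (n₂ - 1) n₃) := by
  have hcard : n₁ + 1 + (n₂ - 1) + n₃ = n₁ + n₂ + n₃ := by omega
  have hprod : (n₁ + 1) * (n₂ - 1) < n₁ * n₂ := by
    obtain ⟨m, rfl⟩ : ∃ m, n₂ = m + 1 := ⟨n₂ - 1, by omega⟩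
    rw [Nat.add_sub_cancel]
    nlinarith
  rw [GJoin.hararyIndex_eq h3, GJoin.hararyIndex_eq h3, hcard]
  gcongr
end

section
/- Let n_1 ≥ n_2 ≥ 2 and n_3 ≥ 1 be integers. Then H(G_{n_1,n_2,n_3}) − H(G_{n_1+1,n_2−1,n_3}) = (n_2 − n_1 − 1)/2. -/
open SimpleGraph

lemma gjoin_adj {a b c : ℕ} (u v : Fin a ⊕ Fin b ⊕ Fin c) (hne : u ≠ v)
    (h : triPart u = triPart v ∨ triPart u = 2 ∨ triPart v = 2) :
    (GJoin a b c).Adj u v := by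
  simp only [GJoin, fromRel_adj]
  exact ⟨hne, Or.inl h⟩

lemma dist_cross {a b c : ℕ} (hc : 0 < c) (u v : Fin a ⊕ Fin b ⊕ Fin c)
    (hu : triPart u ≠ 2) (hv : triPart v ≠ 2) (huv : triPart u ≠ triPart v) :
    (GJoin a b c).dist u v = 2 := by
  set w : Fin a ⊕ Fin b ⊕ Fin c := Sum.inr (Sum.inr ⟨0, hc⟩) with hw
  have hwp : triPart w = 2 := rfl
  have hne : u ≠ v := fun h => huv (by rw [h])
  have h1 : (GJoin a b c).Adj u w := gjoin_adj _ _
    (by intro h; rw [h, hwp] at hu; exact hu rfl) (Or.inr (Or.inr hwp))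
  have h2 : (GJoin a b c).Adj w v := gjoin_adj _ _
    (by intro h; rw [← h, hwp] at hv; exact hv rfl) (Or.inr (Or.inl hwp))
  have hnadj : ¬ (GJoin a b c).Adj u v := by
    simp only [GJoin, fromRel_adj]
    rintro ⟨-, (⟨h | h | h⟩ | ⟨h | h | h⟩)⟩ <;> first
      | exact huv h | exact hu h | exact hv h | exact huv h.symm
  have hle : (GJoin a b c).dist u v ≤ 2 := by
    have := SimpleGraph.dist_le (Walk.cons h1 (Walk.cons h2 Walk.nil))
    simpa using this
  have h0 : (GJoin a b c).dist u v ≠ 0 := by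
    intro h
    rw [SimpleGraph.dist_eq_zero_iff_eq_or_not_reachable] at h
    rcases h with h | h
    · exact hne h
    · exact h ⟨Walk.cons h1 (Walk.cons h2 Walk.nil)⟩
  have h1' : (GJoin a b c).dist u v ≠ 1 := by
    intro h
    rw [SimpleGraph.dist_eq_one_iff_adj] at h
    exact hnadj h
  omega

lemma gdist_inv {a b c : ℕ} (hc : 0 < c) (u v : Fin a ⊕ Fin b ⊕ Fin c) :
    (1 : ℝ) / ((GJoin a b c).dist u v) =
      (if u = v then 0 else 1) -
        (if (triPart u = 0 ∧ triPart v = 1) ∨ (triPart u = 1 ∧ triPart v = 0)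
          then (1/2 : ℝ) else 0) := by
  by_cases huv : u = v
  · subst huv
    simp [SimpleGraph.dist_self, triPart]
    rcases u with u | u | u <;> simp [triPart]
  · by_cases hcr : (triPart u = 0 ∧ triPart v = 1) ∨ (triPart u = 1 ∧ triPart v = 0)
    · have : (GJoin a b c).dist u v = 2 := by
        apply dist_cross hc <;> rcases hcr with ⟨h1, h2⟩ | ⟨h1, h2⟩ <;> omega
      rw [this]; norm_num [huv, hcr]
    · have hadj : (GJoin a b c).Adj u v := by
        apply gjoin_adj _ _ huv
        have h0 : triPart u = 0 ∨ triPart u = 1 ∨ triPart u = 2 := by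
          rcases u with u | u | u <;> simp [triPart]
        have h0' : triPart v = 0 ∨ triPart v = 1 ∨ triPart v = 2 := by
          rcases v with v | v | v <;> simp [triPart]
        by_contra h
        push_neg at h
        obtain ⟨h1, h2, h3⟩ := h
        rcases h0 with h | h | h <;> rcases h0' with h' | h' | h' <;> omega
      rw [SimpleGraph.dist_eq_one_iff_adj.mpr hadj]
      norm_num [huv, hcr]

lemma sum_offdiag (n : ℕ) (x : Fin n) :
    (∑ y : Fin n, if x = y then (0:ℝ) else 1) = n - 1 := by
  have : ∀ y : Fin n, (if x = y then (0:ℝ) else 1) = 1 - if x = y then 1 else 0 := by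
    intro y; split <;> ring
  simp only [this, Finset.sum_sub_distrib, Finset.sum_const, Finset.sum_ite_eq,
    Finset.mem_univ, if_true, Finset.card_univ, Fintype.card_fin, nsmul_eq_mul, mul_one]

lemma harary_val (a b c : ℕ) (hc : 0 < c) :
    hararyIndex (GJoin a b c) =
      (((a : ℝ) + b + c) * ((a : ℝ) + b + c - 1) - a * b) / 2 := by
  unfold hararyIndex
  have : (∑ u : Fin a ⊕ Fin b ⊕ Fin c, ∑ v : Fin a ⊕ Fin b ⊕ Fin c,
      (1 : ℝ) / ((GJoin a b c).dist u v)) =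
      ((a : ℝ) + b + c) * ((a : ℝ) + b + c - 1) - a * b := by
    simp only [gdist_inv hc]
    simp [Fintype.sum_sum_type, triPart, Finset.sum_ite_eq, Finset.sum_sub_distrib,
      Finset.mul_sum, Finset.sum_const, Sum.inl.injEq, Sum.inr.injEq, sum_offdiag]
    ring
  rw [this]

/-- For `n₁ ≥ n₂ ≥ 2` and `n₃ ≥ 1`,
`H(G_{n₁,n₂,n₃}) − H(G_{n₁+1,n₂-1,n₃}) = (n₂ − n₁ − 1)/2`. -/
theorem harary_GJoin_sub (n₁ n₂ n₃ : ℕ) (h2 : 2 ≤ n₂) (h12 : n₂ ≤ n₁) (h3 : 1 ≤ n₃) :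
    hararyIndex (GJoin n₁ n₂ n₃) - hararyIndex (GJoin (n₁ + 1) (n₂ - 1) n₃) =
      ((n₂ : ℝ) - n₁ - 1) / 2 := by
  rw [harary_val _ _ _ h3, harary_val _ _ _ h3]
  have h1 : (1:ℕ) ≤ n₂ := by omega
  push_cast [Nat.cast_sub h1]
  ring
end
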